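/- arXiv:1901.11189 — 7 statements merged into one kernel-verified Lean document; each statement's English description precedes it below -/
import Mathlib

section
/- Let G be a weighted undirected graph with n nodes, edge set E of cardinality m and edge weights a_{ij} > 0, let q ∈ ℝ^n be a balanced vector (q ⟂ 1_n), let γ ∈ [0,π), let {h_e}_{e∈E} be a family of continuously differentiable 2π-periodic odd functions, and let {H_e}_{e∈E} be a family of twice differentiable 2π-periodic even functions such that dH_e/dα (α) = h_e(α) for each edge e and each α ∈ (−γ,γ). Then for θ ∈ 𝕋^n the following are equivalent: (i) there exists f ∈ ℝ^m such that (f,θ) solves the flow network problem for (G,{h_e},q,γ); (ii) θ solves the elastic network problem for (G,{H_e},q,γ), i.e. q = ∇_θ H(θ) where H(θ) = Σ_{(i,j)∈E} a_{ij} H_e(θ_i − θ_j), and |θ_i − θ_j| ≤ γ for every edge (i,j). -/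
open scoped BigOperators
open Real Matrix

noncomputable section

/-- Counterclockwise difference on the circle: the representative of `α - β` in `[-π, π)`. -/
def dcc (α β : Real.Angle) : ℝ := -((β - α).toReal)

/-- An oriented (multi)graph on node set `Fin n` with edge set `Fin m`;
each edge has a source and a target (sink) node. -/
structure OGraph (n m : ℕ) where
  src : Fin m → Fin n
  tgt : Fin m → Fin n
  noLoop : ∀ e, src e ≠ tgt e

namespace OGraph

variable {n m : ℕ}

/-- Incidence matrix `B`: entry `+1` at the sink (target) of an edge, `-1` at its source. -/
def inc (G : OGraph n m) : Matrix (Fin n) (Fin m) ℝ :=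
  Matrix.of fun k e => if k = G.tgt e then (1 : ℝ) else if k = G.src e then -1 else 0

/-- Two nodes are adjacent if some edge joins them. -/
def adjRel (G : OGraph n m) (i j : Fin n) : Prop :=
  ∃ e, (G.src e = i ∧ G.tgt e = j) ∨ (G.src e = j ∧ G.tgt e = i)

/-- The (undirected) graph is connected. -/
def Connected (G : OGraph n m) : Prop :=
  ∀ i j : Fin n, Relation.ReflTransGen G.adjRel i j

/-- The vector `(Bᵀ θ)` of counterclockwise differences along the oriented edges. -/
def edgeDiff (G : OGraph n m) (θ : Fin n → Real.Angle) : Fin m → ℝ :=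
  fun e => dcc (θ (G.tgt e)) (θ (G.src e))

/-- Membership in the punctured `n`-torus: all edge differences have geodesic length `< π`. -/
def Punctured (G : OGraph n m) (θ : Fin n → Real.Angle) : Prop :=
  ∀ e, |G.edgeDiff θ e| < π

/-- A cycle in the graph: a cyclically ordered sequence of `k + 3 ≥ 3` distinct nodes,
any two consecutive ones joined by an edge, traversed positively or negatively. -/
structure Cycle (G : OGraph n m) where
  k : ℕ
  vert : Fin (k + 3) → Fin n
  vertInj : Function.Injective vert
  edge : Fin (k + 3) → Fin m
  dir : Fin (k + 3) → Bool
  pos_compat : ∀ i, dir i = true → G.tgt (edge i) = vert i ∧ G.src (edge i) = vert (i + 1)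
  neg_compat : ∀ i, dir i = false → G.src (edge i) = vert i ∧ G.tgt (edge i) = vert (i + 1)

namespace Cycle

variable {G : OGraph n m}

/-- The number of nodes of the cycle. -/
def len (σ : G.Cycle) : ℕ := σ.k + 3

/-- Signed cycle vector `v_σ ∈ {-1,0,1}^m`. -/
def sgnVec (σ : G.Cycle) : Fin m → ℝ := fun e =>
  ∑ i : Fin (σ.k + 3), if σ.edge i = e then (if σ.dir i then (1 : ℝ) else -1) else 0

/-- Winding number of `θ` along the cycle `σ`. -/
def winding (σ : G.Cycle) (θ : Fin n → Real.Angle) : ℝ :=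
  (1 / (2 * π)) * ∑ i : Fin (σ.k + 3), dcc (θ (σ.vert i)) (θ (σ.vert (i + 1)))

end Cycle

/-- A family of cycles is a cycle basis if the signed cycle vectors form a basis
of the cycle space `Ker B`. -/
def IsCycleBasis (G : OGraph n m) (c : Fin (m + 1 - n) → G.Cycle) : Prop :=
  LinearIndependent ℝ (fun i => (c i).sgnVec) ∧
    Submodule.span ℝ (Set.range fun i => (c i).sgnVec) = LinearMap.ker G.inc.mulVecLin

/-- Cycle–edge matrix `C_Σ`, whose rows are the signed cycle vectors. -/
def cycMat (G : OGraph n m) (c : Fin (m + 1 - n) → G.Cycle) :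
    Matrix (Fin (m + 1 - n)) (Fin m) ℝ :=
  Matrix.of fun i e => (c i).sgnVec e

/-- Winding map along a family of cycles. -/
def windingMap (G : OGraph n m) (c : Fin (m + 1 - n) → G.Cycle)
    (θ : Fin n → Real.Angle) : Fin (m + 1 - n) → ℝ :=
  fun i => (c i).winding θ

/-- Image of the winding map over the punctured torus. -/
def windingImage (G : OGraph n m) (c : Fin (m + 1 - n) → G.Cycle) :
    Set (Fin (m + 1 - n) → ℝ) :=
  {u | ∃ θ, G.Punctured θ ∧ G.windingMap c θ = u}

/-- The `u`-winding cell `Ω^G_u = w_Σ⁻¹(u)`. -/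
def windingCell (G : OGraph n m) (c : Fin (m + 1 - n) → G.Cycle)
    (u : Fin (m + 1 - n) → ℝ) : Set (Fin n → Real.Angle) :=
  {θ | G.Punctured θ ∧ G.windingMap c θ = u}

end OGraph

/-- `(f, θ)` is a solution of the flow network problem for `(G, {h_e}, p, γ)`. -/
def IsFlowSol {n m : ℕ} (G : OGraph n m) (a : Fin m → ℝ) (h : Fin m → ℝ → ℝ)
    (p : Fin n → ℝ) (γ : ℝ) (f : Fin m → ℝ) (θ : Fin n → Real.Angle) : Prop :=
  G.inc.mulVec f = p ∧ (∀ e, f e = a e * h e (G.edgeDiff θ e)) ∧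
    ∀ e, |G.edgeDiff θ e| ≤ γ

/-- A flow function: continuously differentiable, `2π`-periodic, odd. -/
def IsFlowFun (h : ℝ → ℝ) : Prop :=
  ContDiff ℝ 1 h ∧ Function.Periodic h (2 * π) ∧ ∀ x, h (-x) = -h x

/-- Monotone on a set: strictly increasing or strictly decreasing. -/
def StrictMonoOrAntiOn (h : ℝ → ℝ) (s : Set ℝ) : Prop :=
  StrictMonoOn h s ∨ StrictAntiOn h s

/-- `ψ` is obtained from `θ` by a rigid rotation `rot_s`, `s ∈ [-π, π)`. -/
def RotEquiv {n : ℕ} (θ ψ : Fin n → Real.Angle) : Prop :=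
  ∃ s ∈ Set.Ico (-π) π, ∀ i, ψ i = θ i + (s : Real.Angle)

/-- `N` is the Moore–Penrose pseudoinverse of `M`. -/
def IsMoorePenrose {k l : ℕ} (M : Matrix (Fin k) (Fin l) ℝ)
    (N : Matrix (Fin l) (Fin k) ℝ) : Prop :=
  M * N * M = M ∧ N * M * N = N ∧ (M * N)ᵀ = M * N ∧ (N * M)ᵀ = N * M

/-- `D`-weighted norm `‖v‖_D = ‖D^{1/2} v‖₂` for a positive diagonal weight `d`. -/
def wNorm {k : ℕ} (d v : Fin k → ℝ) : ℝ := Real.sqrt (∑ e, d e * v e ^ 2)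

/-- `∞`-norm of a matrix: maximum absolute row sum. -/
def matInfNorm {k l : ℕ} (M : Matrix (Fin k) (Fin l) ℝ) : ℝ := ⨆ i, ∑ j, |M i j|

/-- The extended flow function `h_γ` (one scalar component). -/
def extFlow (h : ℝ → ℝ) (γ : ℝ) : ℝ → ℝ := fun y =>
  if γ ≤ y then deriv h γ * (y - γ) + h γ
  else if y ≤ -γ then deriv h γ * (y + γ) + h (-γ)
  else h y

/-- The vector `h_γ^{-1}(𝒜^{-1} f)`. -/
def hGammaInv {m : ℕ} (h : Fin m → ℝ → ℝ) (γ : ℝ) (a f : Fin m → ℝ) : Fin m → ℝ :=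
  fun e => Function.invFun (extFlow (h e) γ) (f e / a e)

/-- `(L_min)_{ee} = min_{y ∈ [-γ,γ]} h_e'(y)`. -/
def lminOf {m : ℕ} (h : Fin m → ℝ → ℝ) (γ : ℝ) : Fin m → ℝ :=
  fun e => sInf (deriv (h e) '' Set.Icc (-γ) γ)

/-- `(L_max)_{ee} = max_{y ∈ [-γ,γ]} h_e'(y)`. -/
def lmaxOf {m : ℕ} (h : Fin m → ℝ → ℝ) (γ : ℝ) : Fin m → ℝ :=
  fun e => sSup (deriv (h e) '' Set.Icc (-γ) γ)

/-- The `D`-weighted cycle projection `𝒫_D = I - D𝒜Bᵀ(B D𝒜 Bᵀ)† B`, where `N`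
stands for the pseudoinverse `(B D𝒜 Bᵀ)†`. -/
def cycProj {n m : ℕ} (G : OGraph n m) (a d : Fin m → ℝ)
    (N : Matrix (Fin n) (Fin n) ℝ) : Matrix (Fin m) (Fin m) ℝ :=
  1 - Matrix.diagonal d * Matrix.diagonal a * G.incᵀ * N * G.inc

/-- The `u`-winding fixed-point map `T_u`. -/
def Tmap {n m : ℕ} (G : OGraph n m) (a : Fin m → ℝ) (h : Fin m → ℝ → ℝ) (γ : ℝ)
    (N : Matrix (Fin n) (Fin n) ℝ) (Cdag : Matrix (Fin m) (Fin (m + 1 - n)) ℝ)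
    (u : Fin (m + 1 - n) → ℝ) (f : Fin m → ℝ) : Fin m → ℝ :=
  f - (cycProj G a (lminOf h γ) N).mulVec
    ((Matrix.diagonal (lminOf h γ) * Matrix.diagonal a).mulVec
      (hGammaInv h γ a f - (2 * π) • Cdag.mulVec u))

/-- The `u`-winding balance equation. -/
def WindingBalance {n m : ℕ} (G : OGraph n m) (a : Fin m → ℝ) (h : Fin m → ℝ → ℝ)
    (p : Fin n → ℝ) (γ : ℝ) (N : Matrix (Fin n) (Fin n) ℝ)
    (Cdag : Matrix (Fin m) (Fin (m + 1 - n)) ℝ) (u : Fin (m + 1 - n) → ℝ)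
    (f : Fin m → ℝ) : Prop :=
  G.inc.mulVec f = p ∧
    (cycProj G a (lminOf h γ) N).mulVec
      ((Matrix.diagonal (lminOf h γ) * Matrix.diagonal a).mulVec
        (hGammaInv h γ a f - (2 * π) • Cdag.mulVec u)) = 0 ∧
    ∀ e, |f e| ≤ a e * |h e γ|

/-! Lift `θ` to `x ∈ ℝⁿ`. The `i`-th partial derivative of the elastic energy is
`(B (aₑ Hₑ'(x_tgt - x_src))ₑ)ᵢ`; since `Hₑ'` is `2π`-periodic, it may be evaluated at the
counterclockwise difference `θ_tgt - θ_src`, which lies in `[-γ, γ]`, where `Hₑ' = hₑ` by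
continuity. Hence `∇H(θ) = B f` for the flow `fₑ = aₑ hₑ(θ_tgt - θ_src)`, and both problems
say `B f = q`. -/

open Set Function

lemma Function.Periodic.deriv_eq_of_coe_eq {H : ℝ → ℝ} (hper : Periodic H (2 * π)) {x y : ℝ}
    (hxy : (x : Angle) = y) : deriv H x = deriv H y := by
  have hper' : Periodic (deriv H) (2 * π) := fun z => by
    rw [← deriv_comp_add_const, funext hper]
  obtain ⟨k, hk⟩ := Angle.angle_eq_iff_two_pi_dvd_sub.mp hxy
  rw [show x = y + k * (2 * π) by linarith, hper'.int_mul k y]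

lemma Function.Even.deriv_zero {H : ℝ → ℝ} (heven : H.Even) : deriv H 0 = 0 := by
  have h := deriv_comp_neg H 0
  rw [funext heven, neg_zero] at h
  linarith

lemma eqOn_deriv_Icc_of_hasDerivAt_Ioo {H h : ℝ → ℝ} {γ : ℝ} (hγ : 0 < γ)
    (hH' : Continuous (deriv H)) (hh : Continuous h)
    (hHh : ∀ α ∈ Ioo (-γ) γ, HasDerivAt H (h α) α) : EqOn (deriv H) h (Icc (-γ) γ) := by
  rw [← closure_Ioo (by linarith : -γ ≠ γ)]
  exact EqOn.closure (fun α hα => (hHh α hα).deriv) hH' hh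

-- At `γ = 0` the interval `(-γ, γ)` is empty, and parity alone gives `H'(0) = 0 = h(0)`.
lemma deriv_eq_of_abs_le {H h : ℝ → ℝ} {γ y : ℝ} (heven : H.Even) (hodd : h.Odd)
    (hH' : Continuous (deriv H)) (hh : Continuous h)
    (hHh : ∀ α ∈ Ioo (-γ) γ, HasDerivAt H (h α) α) (hy : |y| ≤ γ) : deriv H y = h y := by
  rcases (abs_nonneg y).trans hy |>.eq_or_lt with hγ0 | hγpos
  · obtain rfl : y = 0 := abs_eq_zero.mp (le_antisymm (hγ0 ▸ hy) (abs_nonneg y))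
    rw [heven.deriv_zero, hodd.map_zero]
  · exact eqOn_deriv_Icc_of_hasDerivAt_Ioo hγpos hH' hh hHh (abs_le.mp hy)

namespace OGraph

variable {n m : ℕ} (G : OGraph n m)

lemma inc_apply (i : Fin n) (e : Fin m) :
    G.inc i e =
      (Pi.single i 1 : Fin n → ℝ) (G.tgt e) - (Pi.single i 1 : Fin n → ℝ) (G.src e) := by
  have := G.noLoop e
  by_cases ht : i = G.tgt e <;> by_cases hs : i = G.src e <;>
    simp_all [inc, eq_comm]

lemma coe_edgeDiff (θ : Fin n → Angle) (e : Fin m) :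
    ((G.edgeDiff θ e : ℝ) : Angle) = θ (G.tgt e) - θ (G.src e) := by
  rw [edgeDiff, dcc, Angle.coe_neg, Angle.coe_toReal, neg_sub]

lemma hasDerivAt_comp_update_edge {φ : ℝ → ℝ} (x : Fin n → ℝ) (i : Fin n) (e : Fin m)
    (hφ : DifferentiableAt ℝ φ (x (G.tgt e) - x (G.src e))) :
    HasDerivAt (fun t => φ (update x i t (G.tgt e) - update x i t (G.src e)))
      (G.inc i e * deriv φ (x (G.tgt e) - x (G.src e))) (x i) := by
  have hupd := hasDerivAt_pi.mp (hasDerivAt_update x i (x i))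
  rw [inc_apply, mul_comm]
  exact hφ.hasDerivAt.comp_of_eq (x i) ((hupd (G.tgt e)).sub (hupd (G.src e)))
    (by rw [update_eq_self])

lemma hasDerivAt_energy (a : Fin m → ℝ) {H : Fin m → ℝ → ℝ}
    (hH : ∀ e, Differentiable ℝ (H e)) (x : Fin n → ℝ) (i : Fin n) :
    HasDerivAt (fun t => ∑ e, a e * H e (update x i t (G.tgt e) - update x i t (G.src e)))
      ((G.inc *ᵥ fun e => a e * deriv (H e) (x (G.tgt e) - x (G.src e))) i) (x i) := by
  simp only [mulVec, dotProduct, mul_left_comm (G.inc i _)]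
  exact HasDerivAt.fun_sum fun e _ =>
    (G.hasDerivAt_comp_update_edge x i e (hH e _)).const_mul (a e)

end OGraph

theorem flow_elastic_equivalence_general {n m : ℕ} (G : OGraph n m)
    (a : Fin m → ℝ)
    (q : Fin n → ℝ)
    (γ : ℝ)
    (h : Fin m → ℝ → ℝ) (hflow : ∀ e, IsFlowFun (h e))
    (H : Fin m → ℝ → ℝ)
    (hHdiff : ∀ e, Differentiable ℝ (H e))
    (hHdiff2 : ∀ e, Differentiable ℝ (deriv (H e)))
    (hHper : ∀ e, Function.Periodic (H e) (2 * π))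
    (hHeven : ∀ e x, H e (-x) = H e x)
    (hHh : ∀ e, ∀ α ∈ Set.Ioo (-γ) γ, HasDerivAt (H e) (h e α) α)
    (θ : Fin n → Real.Angle) :
    (∃ f : Fin m → ℝ, IsFlowSol G a h q γ f θ) ↔
      ((∀ e, |G.edgeDiff θ e| ≤ γ) ∧
        ∀ x : Fin n → ℝ, (∀ i, ((x i : ℝ) : Real.Angle) = θ i) →
          ∀ i : Fin n,
            HasDerivAt
              (fun t => ∑ e, a e *
                H e (Function.update x i t (G.tgt e) - Function.update x i t (G.src e)))
              (q i) (x i)) := by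
  set f : Fin m → ℝ := fun e => a e * h e (G.edgeDiff θ e)
  have hgrad : (∀ e, |G.edgeDiff θ e| ≤ γ) → ∀ x : Fin n → ℝ,
      (∀ i, ((x i : ℝ) : Angle) = θ i) → ∀ i, HasDerivAt
        (fun t => ∑ e, a e * H e (update x i t (G.tgt e) - update x i t (G.src e)))
        ((G.inc *ᵥ f) i) (x i) := by
    intro hbnd x hx i
    convert G.hasDerivAt_energy a hHdiff x i using 4 with e
    have hlift : ((x (G.tgt e) - x (G.src e) : ℝ) : Angle) = G.edgeDiff θ e := by
      rw [G.coe_edgeDiff, Angle.coe_sub, hx, hx]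
    rw [(hHper e).deriv_eq_of_coe_eq hlift, deriv_eq_of_abs_le (hHeven e) (hflow e).2.2
      (hHdiff2 e).continuous (hflow e).1.continuous (hHh e) (hbnd e)]
  constructor
  · rintro ⟨f', hBf, hf, hbnd⟩
    obtain rfl : f' = f := funext hf
    exact ⟨hbnd, fun x hx i => hBf ▸ hgrad hbnd x hx i⟩
  · rintro ⟨hbnd, hq⟩
    refine ⟨f, funext fun i => ?_, fun _ => rfl, hbnd⟩
    have hx : ∀ j, (((θ j).toReal : ℝ) : Angle) = θ j := fun j => Angle.coe_toReal _
    exact (hgrad hbnd _ hx i).unique (hq _ hx i)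

/-- Equivalence of flow and elastic network problems on the n-torus. -/
theorem flow_elastic_equivalence {n m : ℕ} (G : OGraph n m)
    (a : Fin m → ℝ) (ha : ∀ e, 0 < a e)
    (q : Fin n → ℝ) (hq : ∑ i, q i = 0)
    (γ : ℝ) (hγ : γ ∈ Set.Ico 0 π)
    (h : Fin m → ℝ → ℝ) (hflow : ∀ e, IsFlowFun (h e))
    (H : Fin m → ℝ → ℝ)
    (hHdiff : ∀ e, Differentiable ℝ (H e))
    (hHdiff2 : ∀ e, Differentiable ℝ (deriv (H e)))
    (hHper : ∀ e, Function.Periodic (H e) (2 * π))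
    (hHeven : ∀ e x, H e (-x) = H e x)
    (hHh : ∀ e, ∀ α ∈ Set.Ioo (-γ) γ, HasDerivAt (H e) (h e α) α)
    (θ : Fin n → Real.Angle) :
    (∃ f : Fin m → ℝ, IsFlowSol G a h q γ f θ) ↔
      ((∀ e, |G.edgeDiff θ e| ≤ γ) ∧
        ∀ x : Fin n → ℝ, (∀ i, ((x i : ℝ) : Real.Angle) = θ i) →
          ∀ i : Fin n,
            HasDerivAt
              (fun t => ∑ e, a e *
                H e (Function.update x i t (G.tgt e) - Function.update x i t (G.src e)))
              (q i) (x i)) :=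
  flow_elastic_equivalence_general G a q γ h hflow H hHdiff hHdiff2 hHper hHeven hHh θ
end
end

section
/- Let G be a cyclic connected undirected graph with n nodes and m edges, let σ be a cycle in G with n_σ nodes, and let θ ∈ 𝕋ⁿ₀ (the punctured n-torus). Then the winding number w_σ(θ) = (1/2π) Σ_{i=1}^{n_σ} d_cc(θ_i,θ_{i+1}) is an integer and satisfies |w_σ(θ)| ≤ ⌈n_σ/2⌉ − 1. -/
open scoped BigOperators
open Real Matrix

noncomputable section

lemma aux_abs_toReal_neg (a : Real.Angle) : |(-a).toReal| = |a.toReal| := by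
  rcases eq_or_ne a.toReal π with h | h
  · have ha : a = (π : Real.Angle) := by rw [← a.coe_toReal, h]
    rw [ha, Real.Angle.neg_coe_pi]
  · have h2 : (-a) = ((-a.toReal : ℝ) : Real.Angle) := by
      rw [Real.Angle.coe_neg, a.coe_toReal]
    rw [h2, Real.Angle.toReal_coe_eq_self_iff.2
      ⟨by linarith [lt_of_le_of_ne a.toReal_le_pi h], by linarith [a.neg_pi_lt_toReal]⟩,
      abs_neg]

/-- Kirchhoff's angle law: the winding number is an integer and
satisfies `|w_σ(θ)| ≤ ⌈n_σ/2⌉ - 1`. -/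
theorem winding_number_integer_bound {n m : ℕ} (G : OGraph n m)
    (hconn : G.Connected) (hcyc : Nonempty G.Cycle)
    (σ : G.Cycle) (θ : Fin n → Real.Angle) (hθ : G.Punctured θ) :
    ∃ z : ℤ, σ.winding θ = (z : ℝ) ∧ |z| ≤ (((σ.len + 1) / 2 : ℕ) : ℤ) - 1 := by
  classical
  set t : Fin (σ.k + 3) → ℝ := fun i => dcc (θ (σ.vert i)) (θ (σ.vert (i + 1))) with ht
  have hbound : ∀ i, |t i| < π := by
    intro i
    have hE := hθ (σ.edge i)
    have habs : |t i| = |(θ (σ.vert (i + 1)) - θ (σ.vert i)).toReal| := by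
      simp [ht, dcc]
    cases hd : σ.dir i with
    | true =>
      obtain ⟨h1, h2⟩ := σ.pos_compat i hd
      rw [OGraph.edgeDiff] at hE
      rw [h1, h2] at hE
      simpa [dcc, habs] using hE
    | false =>
      obtain ⟨h1, h2⟩ := σ.neg_compat i hd
      rw [OGraph.edgeDiff] at hE
      rw [h1, h2] at hE
      rw [habs, ← aux_abs_toReal_neg, neg_sub]
      simpa [dcc] using hE
  have hcoe : ∀ i, ((t i : ℝ) : Real.Angle) = θ (σ.vert i) - θ (σ.vert (i + 1)) := by
    intro i
    rw [ht]
    simp only [dcc, Real.Angle.coe_neg, Real.Angle.coe_toReal, neg_sub]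
  have hsum0 : ((∑ i, t i : ℝ) : Real.Angle) = 0 := by
    have hmap : ((∑ i, t i : ℝ) : Real.Angle) = ∑ i, ((t i : ℝ) : Real.Angle) := by
      exact map_sum (QuotientAddGroup.mk' (AddSubgroup.zmultiples (2 * π))) t Finset.univ
    rw [hmap]
    simp_rw [hcoe]
    rw [Finset.sum_sub_distrib]
    have hshift : ∑ i : Fin (σ.k + 3), θ (σ.vert (i + 1)) = ∑ i, θ (σ.vert i) :=
      Fintype.sum_equiv (Equiv.addRight 1) _ _ (fun i => rfl)
    rw [hshift, sub_self]
  obtain ⟨z, hz⟩ := (AddCircle.coe_eq_zero_iff (2 * π)).mp hsum0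
  have hz' : ∑ i, t i = z * (2 * π) := by rw [← hz]; simp [zsmul_eq_mul]
  have hpi : (0 : ℝ) < π := Real.pi_pos
  refine ⟨z, ?_, ?_⟩
  · rw [OGraph.Cycle.winding]
    have : ∑ i : Fin (σ.k + 3), dcc (θ (σ.vert i)) (θ (σ.vert (i + 1))) = ∑ i, t i := rfl
    rw [this, hz']
    field_simp
  · have hlt : |∑ i, t i| < (σ.k + 3) * π := by
      calc |∑ i, t i| ≤ ∑ i, |t i| := Finset.abs_sum_le_sum_abs _ _
        _ < ∑ _i : Fin (σ.k + 3), π :=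
          Finset.sum_lt_sum_of_nonempty (by simp) (fun i _ => hbound i)
        _ = (σ.k + 3) * π := by simp [mul_comm]
    rw [hz', abs_mul] at hlt
    have h2pi : |(2 * π : ℝ)| = 2 * π := abs_of_pos (by linarith)
    rw [h2pi] at hlt
    have hzr : (2 * |z| : ℝ) < (σ.k + 3 : ℕ) := by
      push_cast
      nlinarith [abs_nonneg (z : ℝ)]
    have hzi : (2 * |z| : ℤ) < ((σ.k + 3 : ℕ) : ℤ) := by exact_mod_cast hzr
    have hlen : σ.len = σ.k + 3 := rfl
    rw [hlen]
    omega

end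
end

section
/- Let G be a cyclic connected undirected graph with n nodes and m edges and let Σ = {σ_1,…,σ_{m−n+1}} be a cycle basis for G. Then the winding map w_Σ : 𝕋ⁿ₀ → ℤ^{m−n+1}, θ ↦ (w_{σ_1}(θ),…,w_{σ_{m−n+1}}(θ)), is piecewise constant (a piecewise continuous map with finite range) and its image satisfies |Img(w_Σ)| ≤ ∏_{i=1}^{m−n+1} (2⌈n_{σ_i}/2⌉ − 1). -/
open scoped BigOperators
open Real Matrix

noncomputable section

section Aux

lemma neg_toReal_of_abs_lt {x : Real.Angle} (h : |x.toReal| < π) :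
    (-x).toReal = -x.toReal := by
  obtain ⟨h1, h2⟩ := abs_lt.1 h
  nth_rewrite 1 [← x.coe_toReal]
  rw [← Real.Angle.coe_neg, Real.Angle.toReal_coe_eq_self_iff]
  constructor <;> linarith

/-- Each summand of the winding number has absolute value `< π` on the punctured torus. -/
lemma abs_dcc_lt {n m : ℕ} {G : OGraph n m} (σ : G.Cycle) {θ : Fin n → Real.Angle}
    (hθ : G.Punctured θ) (i : Fin (σ.k + 3)) :
    |dcc (θ (σ.vert i)) (θ (σ.vert (i + 1)))| < π := by
  have he := hθ (σ.edge i)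
  rcases Bool.eq_false_or_eq_true (σ.dir i) with hd | hd
  · obtain ⟨ht, hs⟩ := σ.pos_compat i hd
    rw [OGraph.edgeDiff, hs, ht] at he
    exact he
  · obtain ⟨hs, ht⟩ := σ.neg_compat i hd
    rw [OGraph.edgeDiff, hs, ht] at he
    unfold dcc at he ⊢
    rw [abs_neg] at he ⊢
    have hne : (θ (σ.vert (i+1)) - θ (σ.vert i)) = -(θ (σ.vert i) - θ (σ.vert (i+1))) := by
      abel
    rw [hne, neg_toReal_of_abs_lt he, abs_neg]
    exact he

/-- The winding number is an integer. -/
lemma winding_eq_int {n m : ℕ} {G : OGraph n m} (σ : G.Cycle) (θ : Fin n → Real.Angle) :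
    ∃ z : ℤ, σ.winding θ = z := by
  set t : Fin (σ.k + 3) → ℝ := fun i => (θ (σ.vert (i + 1)) - θ (σ.vert i)).toReal with ht
  have hsum : ((∑ i, t i : ℝ) : Real.Angle) = 0 := by
    have h1 : ((∑ i, t i : ℝ) : Real.Angle) = ∑ i, ((t i : ℝ) : Real.Angle) := by
      rw [← Real.Angle.coe_coeHom]
      exact map_sum Real.Angle.coeHom t Finset.univ
    rw [h1]
    have h2 : ∀ i, ((t i : ℝ) : Real.Angle) = θ (σ.vert (i + 1)) - θ (σ.vert i) := fun i =>
      Real.Angle.coe_toReal _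
    rw [Finset.sum_congr rfl fun i _ => h2 i, Finset.sum_sub_distrib]
    have h3 : ∑ i : Fin (σ.k + 3), θ (σ.vert (i + 1)) = ∑ i : Fin (σ.k + 3), θ (σ.vert i) :=
      Fintype.sum_equiv (Equiv.addRight (1 : Fin (σ.k + 3)))
        (fun i => θ (σ.vert (i + 1))) (fun i => θ (σ.vert i)) (fun i => rfl)
    rw [h3, sub_self]
  rw [show (0 : Real.Angle) = ((0 : ℝ) : Real.Angle) from (Real.Angle.coe_zero).symm,
    Real.Angle.angle_eq_iff_two_pi_dvd_sub] at hsum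
  obtain ⟨k, hk⟩ := hsum
  rw [sub_zero] at hk
  refine ⟨-k, ?_⟩
  have hdcc : ∀ i, dcc (θ (σ.vert i)) (θ (σ.vert (i + 1))) = -(t i) := fun i => rfl
  have hπ : (2 : ℝ) * π ≠ 0 := by positivity
  rw [OGraph.Cycle.winding, Finset.sum_congr rfl fun i _ => hdcc i, Finset.sum_neg_distrib,
    hk]
  push_cast
  field_simp

/-- Integer bound on the winding number on the punctured torus. -/
lemma winding_natAbs_le {n m : ℕ} {G : OGraph n m} (σ : G.Cycle) {θ : Fin n → Real.Angle}
    (hθ : G.Punctured θ) {z : ℤ} (hz : σ.winding θ = z) :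
    z.natAbs ≤ (σ.len - 1) / 2 := by
  have hbound : |σ.winding θ| < (σ.k + 3) / 2 := by
    have hsum : |∑ i : Fin (σ.k + 3), dcc (θ (σ.vert i)) (θ (σ.vert (i + 1)))|
        < (σ.k + 3) * π := by
      calc |∑ i : Fin (σ.k + 3), dcc (θ (σ.vert i)) (θ (σ.vert (i + 1)))|
          ≤ ∑ i : Fin (σ.k + 3), |dcc (θ (σ.vert i)) (θ (σ.vert (i + 1)))| :=
            Finset.abs_sum_le_sum_abs _ _
        _ < ∑ _i : Fin (σ.k + 3), π :=
            Finset.sum_lt_sum_of_nonempty Finset.univ_nonempty fun i _ => abs_dcc_lt σ hθ i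
        _ = (σ.k + 3) * π := by
            rw [Finset.sum_const, Finset.card_univ, Fintype.card_fin, nsmul_eq_mul]
            push_cast; ring
    have hπ : (0 : ℝ) < π := Real.pi_pos
    rw [OGraph.Cycle.winding, abs_mul, abs_of_pos (by positivity : (0:ℝ) < 1 / (2 * π))]
    calc 1 / (2 * π) * |∑ i : Fin (σ.k + 3), dcc (θ (σ.vert i)) (θ (σ.vert (i + 1)))|
        < 1 / (2 * π) * ((σ.k + 3) * π) := by
          apply mul_lt_mul_of_pos_left hsum (by positivity)
      _ = (σ.k + 3) / 2 := by field_simp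
  rw [hz] at hbound
  have h2 : (2 : ℤ) * z.natAbs < ((σ.k + 3 : ℕ) : ℤ) := by
    have h3 : (2 : ℝ) * |(z : ℝ)| < ((σ.k + 3 : ℕ) : ℝ) := by push_cast; push_cast at hbound; linarith
    rw [← Int.cast_abs, Int.abs_eq_natAbs] at h3
    exact_mod_cast h3
  rw [OGraph.Cycle.len]
  omega

end Aux

/-- The winding map is piecewise constant, with finite range of
cardinality at most `∏ (2⌈n_{σ_i}/2⌉ - 1)`. -/
theorem winding_map_finite_range {n m : ℕ} (G : OGraph n m)
    (hconn : G.Connected) (hcyc : Nonempty G.Cycle)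
    (c : Fin (m + 1 - n) → G.Cycle) (hbasis : G.IsCycleBasis c) :
    (G.windingImage c).Finite ∧
      (G.windingImage c).ncard ≤ ∏ i, (2 * (((c i).len + 1) / 2) - 1) := by
  classical
  set b : Fin (m + 1 - n) → ℕ := fun i => ((c i).len - 1) / 2 with hb
  set F : Finset (Fin (m + 1 - n) → ℝ) :=
    Fintype.piFinset fun i => (Finset.Icc (-(b i : ℤ)) (b i)).image (fun z : ℤ => (z : ℝ))
    with hF
  have hsub : G.windingImage c ⊆ (F : Set (Fin (m + 1 - n) → ℝ)) := by
    rintro u ⟨θ, hθ, hu⟩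
    simp only [hF, Finset.coe_sort_coe, Finset.mem_coe, Fintype.mem_piFinset,
      Finset.mem_image, Finset.mem_Icc]
    intro i
    obtain ⟨z, hz⟩ := winding_eq_int (c i) θ
    have hle := winding_natAbs_le (c i) hθ hz
    refine ⟨z, ⟨?_, ?_⟩, ?_⟩
    · simp only [hb]; omega
    · simp only [hb]; omega
    · rw [← hz, ← hu]; rfl
  have hfin : (G.windingImage c).Finite := Set.Finite.subset F.finite_toSet hsub
  refine ⟨hfin, ?_⟩
  calc (G.windingImage c).ncard ≤ (F : Set (Fin (m + 1 - n) → ℝ)).ncard :=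
        Set.ncard_le_ncard hsub F.finite_toSet
    _ = F.card := Set.ncard_coe_finset F
    _ = ∏ i, ((Finset.Icc (-(b i : ℤ)) (b i)).image (fun z : ℤ => (z : ℝ))).card :=
        Fintype.card_piFinset _
    _ ≤ ∏ i, (2 * (((c i).len + 1) / 2) - 1) := by
        apply Finset.prod_le_prod'
        intro i _
        calc ((Finset.Icc (-(b i : ℤ)) (b i)).image (fun z : ℤ => (z : ℝ))).card
            ≤ (Finset.Icc (-(b i : ℤ)) (b i)).card := Finset.card_image_le
          _ = ((b i : ℤ) + 1 - (-(b i : ℤ))).toNat := Int.card_Icc _ _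
          _ ≤ 2 * (((c i).len + 1) / 2) - 1 := by
              have h3 : 3 ≤ (c i).len := by rw [OGraph.Cycle.len]; omega
              simp only [hb]
              omega

end
end

section
/- Let G be a cyclic connected undirected graph with cycle basis Σ and winding map w_Σ : 𝕋ⁿ₀ → ℤ^{m−n+1}. Then the family {closure(Ω^G_u) : u ∈ Img(w_Σ)} of closed winding cells is a partition of 𝕋ⁿ, in the sense that: (i) 𝕋ⁿ = ⋃_{u ∈ Img(w_Σ)} closure(Ω^G_u); (ii) for all u, v ∈ Img(w_Σ) with u ≠ v, Ω^G_u ∩ Ω^G_v = ∅. -/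
open scoped BigOperators
open Real Matrix

noncomputable section

/-!
Every winding number is an integer of absolute value at most half the length of its cycle:
the counterclockwise differences along a cycle sum to `0` in `ℝ/2πℤ`, and each has size at
most `π`. Hence only finitely many cells occur, and the closure of their union, which is the
punctured torus, is the union of their closures. The punctured torus is dense, since its
complement is the finite union over the edges of the closed sets `θ_i - θ_j = π`, each of which
has empty interior because moving `θ_i` alone leaves it. Distinct cells are disjoint fibres of
the winding map.
-/

open Filter Topology

namespace Real.Angle

theorem abs_toReal_lt_pi_iff {θ : Angle} : |θ.toReal| < π ↔ θ ≠ π := by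
  rw [abs_lt, and_iff_right (neg_pi_lt_toReal θ), (toReal_le_pi θ).lt_iff_ne, Ne,
    toReal_eq_pi_iff]

theorem eventually_coe_ne_zero : ∀ᶠ x : ℝ in 𝓝[≠] 0, (x : Angle) ≠ 0 := by
  filter_upwards [self_mem_nhdsWithin,
    nhdsWithin_le_nhds (Ioo_mem_nhds (neg_neg_of_pos pi_pos) pi_pos)] with x hx0 hx hx_coe
  rw [← toReal_coe_eq_self_iff.2 ⟨hx.1, hx.2.le⟩, hx_coe, toReal_zero] at hx0
  exact hx0 rfl

end Real.Angle

theorem coe_dcc (α β : Real.Angle) : (dcc α β : Real.Angle) = α - β := by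
  rw [dcc, Real.Angle.coe_neg, Real.Angle.coe_toReal, neg_sub]

theorem abs_dcc_le_pi (α β : Real.Angle) : |dcc α β| ≤ π := by
  rw [dcc, abs_neg]
  exact Real.Angle.abs_toReal_le_pi _

theorem dense_setOf_sub_ne {ι : Type*} [DecidableEq ι] {s t : ι} (hst : s ≠ t)
    (a : Real.Angle) : Dense {θ : ι → Real.Angle | θ s - θ t ≠ a} := by
  set S := {θ : ι → Real.Angle | θ s - θ t = a}
  have hS : interior S = ∅ := by
    refine Set.eq_empty_of_forall_notMem fun θ hθ => ?_
    let p : ℝ → ι → Real.Angle := fun x => Function.update θ s (θ s + x)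
    have hp : Continuous p :=
      continuous_const.update s (continuous_const.add Real.Angle.continuous_coe)
    have hp0 : p 0 = θ := by simp [p]
    have hnear : ∀ᶠ x in 𝓝 (0 : ℝ), p x s - p x t = a :=
      hp.continuousAt.eventually_mem (by rw [hp0]; exact mem_interior_iff_mem_nhds.mp hθ)
    obtain ⟨x, hx, hx0⟩ :=
      ((eventually_nhdsWithin_of_eventually_nhds hnear).and
        Real.Angle.eventually_coe_ne_zero).exists
    have hθa : θ s - θ t = a := interior_subset (s := S) hθ
    simp only [p, Function.update_self, Function.update_of_ne hst.symm] at hx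
    exact hx0 (by rw [← hθa] at hx; simpa [add_sub_right_comm] using hx)
  simpa only [S, Set.compl_ofPred] using interior_eq_empty_iff_dense_compl.mp hS

namespace OGraph

variable {n m : ℕ} (G : OGraph n m)

theorem punctured_iff (θ : Fin n → Real.Angle) :
    G.Punctured θ ↔ ∀ e, θ (G.src e) - θ (G.tgt e) ≠ π := by
  simp only [Punctured, edgeDiff, dcc, abs_neg, Real.Angle.abs_toReal_lt_pi_iff]

theorem dense_setOf_punctured : Dense {θ | G.Punctured θ} := by
  simp only [punctured_iff, Set.ofPred_forall, ← Set.sInter_range]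
  refine (Set.finite_range _).dense_sInter ?_ ?_ <;> rintro _ ⟨e, rfl⟩
  · exact isOpen_ne_fun (by fun_prop) continuous_const
  · exact dense_setOf_sub_ne (G.noLoop e) _

namespace Cycle

variable {G} (σ : G.Cycle) (θ : Fin n → Real.Angle)

theorem exists_int_winding_eq : ∃ z : ℤ, σ.winding θ = z := by
  have hsum : ((∑ i, dcc (θ (σ.vert i)) (θ (σ.vert (i + 1))) : ℝ) : Real.Angle) = 0 := by
    rw [← Real.Angle.coe_coeHom, map_sum]
    simp only [Real.Angle.coe_coeHom, coe_dcc, Finset.sum_sub_distrib]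
    exact sub_eq_zero.mpr (Fintype.sum_equiv (Equiv.addRight 1) _ _ fun _ => rfl).symm
  obtain ⟨z, hz⟩ := Real.Angle.coe_eq_zero_iff.mp hsum
  refine ⟨z, ?_⟩
  rw [winding, ← hz, zsmul_eq_mul]
  field_simp

theorem abs_winding_le : |σ.winding θ| ≤ σ.len / 2 := by
  have hsum : |∑ i, dcc (θ (σ.vert i)) (θ (σ.vert (i + 1)))| ≤ σ.len * π :=
    calc _ ≤ ∑ i, |dcc (θ (σ.vert i)) (θ (σ.vert (i + 1)))| := Finset.abs_sum_le_sum_abs _ _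
      _ ≤ ∑ _i : Fin (σ.k + 3), π := Finset.sum_le_sum fun i _ => abs_dcc_le_pi _ _
      _ = σ.len * π := by simp [len]
  rw [winding, abs_mul, abs_of_pos (by positivity), one_div, inv_mul_le_iff₀ (by positivity)]
  linarith

end Cycle

variable (c : Fin (m + 1 - n) → G.Cycle)

theorem windingImage_finite : (G.windingImage c).Finite := by
  refine (Set.Finite.pi fun i =>
    (Set.finite_Icc (-((c i).len : ℤ)) (c i).len).image ((↑) : ℤ → ℝ)).subset ?_
  rintro _ ⟨θ, -, rfl⟩ i -
  obtain ⟨z, hz⟩ := (c i).exists_int_winding_eq θ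
  have hle := (c i).abs_winding_le θ
  rw [hz] at hle
  refine ⟨z, abs_le.mp ?_, hz.symm⟩
  have : |(z : ℝ)| ≤ (c i).len := hle.trans (half_le_self (Nat.cast_nonneg _))
  exact_mod_cast this

theorem biUnion_windingCell :
    ⋃ u ∈ G.windingImage c, G.windingCell c u = {θ | G.Punctured θ} := by
  ext θ
  simp only [Set.mem_iUnion, windingImage, windingCell, Set.mem_ofPred_eq]
  exact ⟨fun ⟨_, _, hθ, _⟩ => hθ, fun hθ => ⟨_, ⟨θ, hθ, rfl⟩, hθ, rfl⟩⟩

end OGraph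

theorem winding_partition_general {n m : ℕ} (G : OGraph n m)
    (c : Fin (m + 1 - n) → G.Cycle) :
    (⋃ u ∈ G.windingImage c, closure (G.windingCell c u)) = Set.univ ∧
      ∀ u ∈ G.windingImage c, ∀ v ∈ G.windingImage c, u ≠ v →
        G.windingCell c u ∩ G.windingCell c v = ∅ := by
  refine ⟨?_, fun u _ v _ huv => ?_⟩
  · rw [← (G.windingImage_finite c).closure_biUnion, G.biUnion_windingCell c]
    exact G.dense_setOf_punctured.closure_eq
  · exact Set.eq_empty_of_forall_notMem fun θ ⟨⟨_, hu⟩, _, hv⟩ => huv (hu.symm.trans hv)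

/-- Winding partition of the n-torus. -/
theorem winding_partition {n m : ℕ} (G : OGraph n m)
    (hconn : G.Connected) (hcyc : Nonempty G.Cycle)
    (c : Fin (m + 1 - n) → G.Cycle) (hbasis : G.IsCycleBasis c) :
    (⋃ u ∈ G.windingImage c, closure (G.windingCell c u)) = Set.univ ∧
      ∀ u ∈ G.windingImage c, ∀ v ∈ G.windingImage c, u ≠ v →
        G.windingCell c u ∩ G.windingCell c v = ∅ :=
  winding_partition_general G c

end
end

section
/- Let G be a connected cyclic undirected graph with n nodes, m edges, cycle basis Σ, winding map w_Σ, and cycle-edge matrix C_Σ ∈ ℝ^{(m−n+1)×m}. Fix u ∈ Img(w_Σ). Then for every equivalence class [θ] ∈ Ω^G_u/𝕋¹ (winding cell modulo uniform rotations) there exists a unique vector x ∈ ℝⁿ with x ⟂ 1_n such that (Bᵀθ) = Bᵀx + 2π C_Σ† u, where C_Σ† is the Moore–Penrose pseudoinverse of C_Σ. -/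
open scoped BigOperators
open Real Matrix

noncomputable section

/-! The edge differences `y = Bᵀθ` of a point of the `u`-winding cell satisfy `C_Σ y = 2π u`:
on the punctured torus `d_cc` is antisymmetric, so the signed edge differences along a cycle are
its counterclockwise steps. Since the rows of `C_Σ` are independent, `C_Σ C_Σ† = 1`, hence
`y - 2π C_Σ† u ∈ ker C_Σ`. The rows of `C_Σ` span `ker B`, so `C_Σ Bᵀ = 0` and
`rank C_Σ + rank Bᵀ = m`, which forces `ker C_Σ = range Bᵀ`. On a connected graph `ker Bᵀ` is the
line of constant vectors, so the lift becomes unique once normalized by `∑ xᵢ = 0`. -/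

namespace Matrix

variable {K l m n : Type*} [Field K] [Fintype m] [Fintype n]

/-- Independent rows make `M` right-cancellable, so the first Penrose equation already makes `N`
a right inverse. -/
theorem mul_eq_one_of_mul_mul_eq_self [DecidableEq m] {M : Matrix m n K} {N : Matrix n m K}
    (hM : LinearIndependent K M.row) (h : M * N * M = M) : M * N = 1 := by
  funext i
  refine vecMul_injective_iff.2 hM ?_
  change ((M * N) * M) i = ((1 : Matrix m m K) * M) i
  rw [h, Matrix.one_mul]

theorem range_mulVecLin_eq_ker_of_mul_eq_zero [Fintype l] {A : Matrix l m K} {B : Matrix m n K}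
    (hAB : A * B = 0) (hrank : A.rank + B.rank = Fintype.card m) :
    LinearMap.range B.mulVecLin = LinearMap.ker A.mulVecLin := by
  refine Submodule.eq_of_le_of_finrank_eq ?_ ?_
  · rw [LinearMap.range_le_ker_iff, ← mulVecLin_mul, hAB, mulVecLin_zero]
  · have := LinearMap.finrank_range_add_finrank_ker A.mulVecLin
    rw [Module.finrank_fintype_fun_eq_card] at this
    change B.rank = _
    change A.rank + _ = _ at this
    omega

end Matrix

theorem dcc_swap {α β : Real.Angle} (h : |dcc α β| < π) : dcc β α = -dcc α β := by
  have hne : β - α ≠ π := by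
    rintro hπ
    rw [dcc, hπ, Real.Angle.toReal_pi, abs_neg, abs_of_pos Real.pi_pos] at h
    exact lt_irrefl _ h
  rw [dcc, dcc, ← neg_sub β α, Real.Angle.toReal_neg_eq_neg_toReal_iff.2 hne]

namespace OGraph

variable {n m : ℕ} {G : OGraph n m}

theorem incT_mulVec_apply (G : OGraph n m) (x : Fin n → ℝ) (e : Fin m) :
    (G.incᵀ *ᵥ x) e = x (G.tgt e) - x (G.src e) := by
  simp [mulVec, dotProduct, inc, ite_mul, Finset.sum_ite, G.noLoop e, Finset.filter_eq',
    sub_eq_add_neg]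

theorem incT_mulVec_const (G : OGraph n m) (s : ℝ) : G.incᵀ *ᵥ (fun _ => s) = 0 := by
  ext e
  simp [incT_mulVec_apply]

theorem Connected.eq_of_incT_mulVec_eq_zero (hG : G.Connected) {v : Fin n → ℝ}
    (hv : G.incᵀ *ᵥ v = 0) (i j : Fin n) : v i = v j := by
  have hedge (e : Fin m) : v (G.src e) = v (G.tgt e) := by
    have := congrFun hv e
    rw [incT_mulVec_apply, Pi.zero_apply, sub_eq_zero] at this
    exact this.symm
  induction hG i j with
  | refl => rfl
  | tail _ hadj ih =>
    obtain ⟨e, ⟨rfl, rfl⟩ | ⟨rfl, rfl⟩⟩ := hadj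
    exacts [ih.trans (hedge e), ih.trans (hedge e).symm]

theorem Connected.injOn_incT_mulVec (hG : G.Connected) :
    Set.InjOn G.incᵀ.mulVec {x | ∑ i, x i = 0} := by
  intro x hx y hy hxy
  have hconst := hG.eq_of_incT_mulVec_eq_zero (v := x - y) (by rw [mulVec_sub, hxy, sub_self])
  ext i
  have hsum : ∑ _j : Fin n, (x - y) i = 0 := by
    rw [← Finset.sum_congr rfl fun j _ => hconst j i]
    simp [Finset.sum_sub_distrib, hx.out, hy.out]
  rw [Finset.sum_const, Finset.card_univ, Fintype.card_fin, nsmul_eq_mul,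
    mul_eq_zero] at hsum
  have hn : (n : ℝ) ≠ 0 := Nat.cast_ne_zero.2 (Fin.pos i).ne'
  exact sub_eq_zero.1 (hsum.resolve_left hn)

/-- Subtracting the mean does not change `Bᵀ x`. -/
theorem exists_sum_eq_zero_incT_mulVec_eq {z : Fin m → ℝ}
    (hz : z ∈ LinearMap.range G.incᵀ.mulVecLin) :
    ∃ x : Fin n → ℝ, ∑ i, x i = 0 ∧ G.incᵀ *ᵥ x = z := by
  obtain ⟨y, rfl⟩ := hz
  refine ⟨y - fun _ => (∑ i, y i) / n, ?_, ?_⟩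
  · rcases Nat.eq_zero_or_pos n with rfl | hn
    · simp
    · simp only [Pi.sub_apply, Finset.sum_sub_distrib, Finset.sum_const, Finset.card_univ,
        Fintype.card_fin, nsmul_eq_mul]
      field_simp
      ring
  · rw [mulVec_sub, incT_mulVec_const, sub_zero]
    rfl

theorem Cycle.sgnVec_dotProduct_edgeDiff (σ : G.Cycle) {θ : Fin n → Real.Angle}
    (hθ : G.Punctured θ) : σ.sgnVec ⬝ᵥ G.edgeDiff θ = 2 * π * σ.winding θ := by
  have hstep (i : Fin (σ.k + 3)) : (if σ.dir i then (1 : ℝ) else -1) * G.edgeDiff θ (σ.edge i)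
      = dcc (θ (σ.vert i)) (θ (σ.vert (i + 1))) := by
    cases hd : σ.dir i
    · obtain ⟨hsrc, htgt⟩ := σ.neg_compat i hd
      have := dcc_swap (hθ (σ.edge i))
      simp only [edgeDiff, hsrc, htgt] at this ⊢
      rw [this]
      simp
    · obtain ⟨htgt, hsrc⟩ := σ.pos_compat i hd
      simp [edgeDiff, htgt, hsrc]
  calc σ.sgnVec ⬝ᵥ G.edgeDiff θ
      = ∑ i, (if σ.dir i then (1 : ℝ) else -1) * G.edgeDiff θ (σ.edge i) := by
        simp only [dotProduct, Cycle.sgnVec, Finset.sum_mul, ite_mul, zero_mul]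
        rw [Finset.sum_comm]
        simp
    _ = 2 * π * σ.winding θ := by
        rw [Finset.sum_congr rfl fun i _ => hstep i, Cycle.winding, ← mul_assoc,
          mul_one_div_cancel (by positivity), one_mul]

theorem cycMat_mulVec_edgeDiff {c : Fin (m + 1 - n) → G.Cycle} {u : Fin (m + 1 - n) → ℝ}
    {θ : Fin n → Real.Angle} (hθ : θ ∈ G.windingCell c u) :
    G.cycMat c *ᵥ G.edgeDiff θ = (2 * π) • u := by
  ext i
  rw [← hθ.2]
  exact (c i).sgnVec_dotProduct_edgeDiff hθ.1

theorem cycMat_mul_incT_eq_zero {c : Fin (m + 1 - n) → G.Cycle}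
    (hc : ∀ i, G.inc *ᵥ (c i).sgnVec = 0) : G.cycMat c * G.incᵀ = 0 := by
  ext i k
  simpa [mul_apply, mulVec, dotProduct, cycMat, mul_comm] using congrFun (hc i) k

namespace IsCycleBasis

variable {c : Fin (m + 1 - n) → G.Cycle}

theorem rank_cycMat (hc : G.IsCycleBasis c) : (G.cycMat c).rank = m + 1 - n := by
  rw [LinearIndependent.rank_matrix (M := G.cycMat c) hc.1, Fintype.card_fin]

theorem rank_inc_add (hc : G.IsCycleBasis c) : G.inc.rank + (m + 1 - n) = m := by
  have := LinearMap.finrank_range_add_finrank_ker G.inc.mulVecLin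
  rwa [← hc.2, finrank_span_eq_card hc.1, Module.finrank_fintype_fun_eq_card, Fintype.card_fin,
    Fintype.card_fin] at this

theorem range_incT_eq_ker_cycMat (hc : G.IsCycleBasis c) :
    LinearMap.range G.incᵀ.mulVecLin = LinearMap.ker (G.cycMat c).mulVecLin := by
  have hcycle (i) : G.inc *ᵥ (c i).sgnVec = 0 := by
    rw [← mulVecLin_apply, ← LinearMap.mem_ker, ← hc.2]
    exact Submodule.subset_span (Set.mem_range_self i)
  refine range_mulVecLin_eq_ker_of_mul_eq_zero (cycMat_mul_incT_eq_zero hcycle) ?_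
  rw [rank_transpose, hc.rank_cycMat, Fintype.card_fin]
  have := hc.rank_inc_add
  omega

end IsCycleBasis

end OGraph

theorem winding_cell_unique_lift_general {n m : ℕ} (G : OGraph n m)
    (hconn : G.Connected)
    (c : Fin (m + 1 - n) → G.Cycle) (hbasis : G.IsCycleBasis c)
    (Cdag : Matrix (Fin m) (Fin (m + 1 - n)) ℝ)
    (hCdag : IsMoorePenrose (G.cycMat c) Cdag)
    (u : Fin (m + 1 - n) → ℝ)
    (θ : Fin n → Real.Angle) (hθ : θ ∈ G.windingCell c u) :
    ∃! x : Fin n → ℝ, (∑ i, x i = 0) ∧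
      G.edgeDiff θ = G.incᵀ.mulVec x + (2 * π) • Cdag.mulVec u := by
  have hCCdag : G.cycMat c * Cdag = 1 := mul_eq_one_of_mul_mul_eq_self hbasis.1 hCdag.1
  have hker :
      G.edgeDiff θ - (2 * π) • Cdag *ᵥ u ∈ LinearMap.ker (G.cycMat c).mulVecLin := by
    rw [LinearMap.mem_ker, mulVecLin_apply, mulVec_sub, mulVec_smul, mulVec_mulVec, hCCdag,
      one_mulVec, OGraph.cycMat_mulVec_edgeDiff hθ, sub_self]
  rw [← hbasis.range_incT_eq_ker_cycMat] at hker
  obtain ⟨x, hx0, hx⟩ := OGraph.exists_sum_eq_zero_incT_mulVec_eq hker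
  refine ⟨x, ⟨hx0, by rw [hx, sub_add_cancel]⟩, fun y ⟨hy0, hy⟩ => ?_⟩
  refine hconn.injOn_incT_mulVec hy0 hx0 ?_
  rw [hx, hy, add_sub_cancel_right]

/-- Polytopic characterization, part 1: for every `θ` in the
`u`-winding cell there is a unique `x ⟂ 1_n` with `Bᵀθ = Bᵀx + 2π C_Σ† u`. -/
theorem winding_cell_unique_lift {n m : ℕ} (G : OGraph n m)
    (hconn : G.Connected) (hcyc : Nonempty G.Cycle)
    (c : Fin (m + 1 - n) → G.Cycle) (hbasis : G.IsCycleBasis c)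
    (Cdag : Matrix (Fin m) (Fin (m + 1 - n)) ℝ)
    (hCdag : IsMoorePenrose (G.cycMat c) Cdag)
    (u : Fin (m + 1 - n) → ℝ) (hu : u ∈ G.windingImage c)
    (θ : Fin n → Real.Angle) (hθ : θ ∈ G.windingCell c u) :
    ∃! x : Fin n → ℝ, (∑ i, x i = 0) ∧
      G.edgeDiff θ = G.incᵀ.mulVec x + (2 * π) • Cdag.mulVec u :=
  winding_cell_unique_lift_general G hconn c hbasis Cdag hCdag u θ hθ

end
end

section
/- Suppose G has exactly one cycle σ with signed cycle vector v_σ, each flow function h_e is strictly increasing on [−γ,γ], and (f,φ), (g,ψ) are two solutions of the flow network problem for (G,{h_e},p,γ). Then w_σ(φ) > w_σ(ψ) if and only if v_σᵀ f > v_σᵀ g; that is, loop flows are strictly increasing with respect to winding numbers. -/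
open scoped BigOperators
open Real Matrix

noncomputable section

namespace LoopAux

open OGraph

variable {n m : ℕ} {G : OGraph n m}

lemma angle_neg_toReal {θ : Real.Angle} (hθ : θ.toReal ≠ π) : (-θ).toReal = -θ.toReal := by
  conv_lhs => rw [← θ.coe_toReal]
  rw [← Real.Angle.coe_neg, Real.Angle.toReal_coe_eq_self_iff]
  refine ⟨by linarith [lt_of_le_of_ne θ.toReal_le_pi hθ], by linarith [θ.neg_pi_lt_toReal]⟩

lemma dcc_flip {α β : Real.Angle} (h : |dcc α β| < π) : dcc β α = -dcc α β := by
  have h1 : (β - α).toReal ≠ π := by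
    intro he
    rw [dcc, he, abs_neg, abs_of_pos Real.pi_pos] at h
    exact lt_irrefl _ h
  have h2 : α - β = -(β - α) := by abel
  rw [dcc, h2, angle_neg_toReal h1, dcc, neg_neg]




lemma fin_succ_ne {k : ℕ} (i : Fin (k + 3)) : i + 1 ≠ i := by
  intro h
  have h3 := congrArg Fin.val h
  rw [Fin.val_add_eq_ite, Fin.val_one] at h3
  have := i.isLt
  split_ifs at h3 <;> omega

lemma fin_two_step {k : ℕ} (a : Fin (k + 3)) : a + 1 + 1 ≠ a := by
  intro h
  have h3 := congrArg Fin.val h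
  rw [Fin.val_add_eq_ite, Fin.val_add_eq_ite, Fin.val_one] at h3
  have := a.isLt
  split_ifs at h3 <;> omega

lemma vert_succ_ne (σ : G.Cycle) (i : Fin (σ.k + 3)) : σ.vert (i + 1) ≠ σ.vert i :=
  fun h => fin_succ_ne i (σ.vertInj h)

/-- endpoints of the i-th edge of a cycle -/
lemma cycle_endpoints (σ : G.Cycle) (i : Fin (σ.k + 3)) :
    (G.tgt (σ.edge i) = σ.vert i ∧ G.src (σ.edge i) = σ.vert (i + 1)) ∨
    (G.src (σ.edge i) = σ.vert i ∧ G.tgt (σ.edge i) = σ.vert (i + 1)) := by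
  cases hd : σ.dir i with
  | true => exact Or.inl (σ.pos_compat i hd)
  | false => exact Or.inr (σ.neg_compat i hd)

lemma edge_once (σ : G.Cycle) {i j : Fin (σ.k + 3)} (h : σ.edge i = σ.edge j) : i = j := by
  have hi := cycle_endpoints σ i
  have hj := cycle_endpoints σ j
  rw [h] at hi
  have h2 : ¬ (i = j + 1 ∧ j = i + 1) := by
    rintro ⟨h3, h4⟩
    rw [h4] at h3
    exact fin_two_step i h3.symm
  rcases hi with ⟨hit, his⟩ | ⟨his, hit⟩ <;> rcases hj with ⟨hjt, hjs⟩ | ⟨hjs, hjt⟩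
  · exact σ.vertInj (hit.symm.trans hjt)
  · exact absurd ⟨σ.vertInj (hit.symm.trans hjt), (σ.vertInj (his.symm.trans hjs)).symm⟩ h2
  · exact absurd ⟨σ.vertInj (his.symm.trans hjs), (σ.vertInj (hit.symm.trans hjt)).symm⟩ h2
  · exact σ.vertInj (his.symm.trans hjs)

lemma sgnVec_edge (σ : G.Cycle) (i : Fin (σ.k + 3)) :
    σ.sgnVec (σ.edge i) = if σ.dir i then 1 else -1 := by
  rw [Cycle.sgnVec, Finset.sum_eq_single i]
  · simp
  · intro j _ hj
    rw [if_neg (fun he => hj (edge_once σ he))]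
  · intro hi; exact absurd (Finset.mem_univ i) hi

lemma sgnVec_edge_ne (σ : G.Cycle) (i : Fin (σ.k + 3)) : σ.sgnVec (σ.edge i) ≠ 0 := by
  rw [sgnVec_edge]; split <;> norm_num

lemma sgnVec_support (σ : G.Cycle) {e : Fin m} (h : σ.sgnVec e ≠ 0) :
    ∃ i, σ.edge i = e := by
  by_contra hc
  push_neg at hc
  apply h
  rw [Cycle.sgnVec]
  exact Finset.sum_eq_zero fun i _ => if_neg (hc i)


lemma inc_mulVec_sgnVec (σ : G.Cycle) : G.inc.mulVec σ.sgnVec = 0 := by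
  funext i
  rw [Matrix.mulVec, Pi.zero_apply]
  simp only [dotProduct]
  have hterm : ∀ e, G.inc i e * σ.sgnVec e =
      ∑ j : Fin (σ.k + 3), (if σ.edge j = e then G.inc i e * (if σ.dir j then (1:ℝ) else -1) else 0) := by
    intro e
    rw [Cycle.sgnVec, Finset.mul_sum]
    congr 1
    funext j
    split <;> simp
  rw [Finset.sum_congr rfl (fun e _ => hterm e), Finset.sum_comm]
  have hsum : ∀ j : Fin (σ.k + 3),
      (∑ e, if σ.edge j = e then G.inc i e * (if σ.dir j then (1:ℝ) else -1) else 0) =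
      (if i = σ.vert j then (1:ℝ) else 0) - (if i = σ.vert (j+1) then (1:ℝ) else 0) := by
    intro j
    rw [Finset.sum_ite_eq (Finset.univ) (σ.edge j)
      (fun e => G.inc i e * (if σ.dir j then (1:ℝ) else -1)), if_pos (Finset.mem_univ _)]
    have hne : σ.vert j ≠ σ.vert (j + 1) := fun h => fin_succ_ne j (σ.vertInj h).symm
    cases hd : σ.dir j with
    | true =>
      obtain ⟨ht, hs⟩ := σ.pos_compat j hd
      rw [inc, Matrix.of_apply, ht, hs]
      by_cases h1 : i = σ.vert j <;> by_cases h2 : i = σ.vert (j + 1)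
      · exact absurd (h1.symm.trans h2) hne
      · simp [h1, h2, hne, Ne.symm hne]
      · simp [h1, h2, hne, Ne.symm hne]
      · simp [h1, h2, hne, Ne.symm hne]
    | false =>
      obtain ⟨hs, ht⟩ := σ.neg_compat j hd
      rw [inc, Matrix.of_apply, ht, hs]
      by_cases h1 : i = σ.vert j <;> by_cases h2 : i = σ.vert (j + 1)
      · exact absurd (h1.symm.trans h2) hne
      · simp [h1, h2, hne, Ne.symm hne]
      · simp [h1, h2, hne, Ne.symm hne]
      · simp [h1, h2, hne, Ne.symm hne]
  rw [Finset.sum_congr rfl (fun j _ => hsum j), Finset.sum_sub_distrib]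
  have hre : (∑ j : Fin (σ.k + 3), if i = σ.vert (j + 1) then (1:ℝ) else 0) =
      ∑ j : Fin (σ.k + 3), if i = σ.vert j then (1:ℝ) else 0 :=
    Fintype.sum_equiv (Equiv.addRight (1 : Fin (σ.k + 3))) _ _ (fun j => rfl)
  rw [hre, sub_self]


lemma winding_eq (σ : G.Cycle) (θ : Fin n → Real.Angle)
    (hb : ∀ e, |G.edgeDiff θ e| < π) :
    σ.winding θ = (1 / (2 * π)) * ∑ e, σ.sgnVec e * G.edgeDiff θ e := by
  rw [Cycle.winding]
  congr 1
  have hstep : ∀ i : Fin (σ.k + 3), dcc (θ (σ.vert i)) (θ (σ.vert (i + 1))) =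
      (if σ.dir i then (1:ℝ) else -1) * G.edgeDiff θ (σ.edge i) := by
    intro i
    cases hd : σ.dir i with
    | true =>
      obtain ⟨ht, hs⟩ := σ.pos_compat i hd
      rw [if_pos rfl, one_mul, edgeDiff, ht, hs]
    | false =>
      obtain ⟨hs, ht⟩ := σ.neg_compat i hd
      have : G.edgeDiff θ (σ.edge i) = dcc (θ (σ.vert (i+1))) (θ (σ.vert i)) := by
        rw [edgeDiff, ht, hs]
      rw [if_neg (by simp), this, dcc_flip, neg_one_mul]
      rw [← this]
      exact hb (σ.edge i)
  rw [Finset.sum_congr rfl (fun i _ => hstep i)]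
  have hrhs : ∀ e, σ.sgnVec e * G.edgeDiff θ e =
      ∑ i : Fin (σ.k + 3), (if σ.edge i = e then (if σ.dir i then (1:ℝ) else -1) * G.edgeDiff θ e else 0) := by
    intro e
    rw [Cycle.sgnVec, Finset.sum_mul]
    congr 1
    funext i
    split <;> simp
  rw [Finset.sum_congr rfl (fun e _ => hrhs e), Finset.sum_comm]
  refine Finset.sum_congr rfl (fun i _ => ?_)
  rw [Finset.sum_ite_eq Finset.univ (σ.edge i)
    (fun e => (if σ.dir i then (1:ℝ) else -1) * G.edgeDiff θ e), if_pos (Finset.mem_univ _)]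




lemma no_parallel (σ : G.Cycle) (huniq : ∀ σ' : G.Cycle, σ'.sgnVec = σ.sgnVec ∨ σ'.sgnVec = -σ.sgnVec)
    {e e' : Fin m} (he : σ.sgnVec e ≠ 0) (hne : e' ≠ e)
    (hpar : (G.src e' = G.src e ∧ G.tgt e' = G.tgt e) ∨
            (G.src e' = G.tgt e ∧ G.tgt e' = G.src e)) : False := by
  obtain ⟨i, hi⟩ := sgnVec_support σ he
  have key : ∀ σ'' : G.Cycle, (∀ j, σ''.edge j ≠ e) → False := by
    intro σ'' hed
    have hz : σ''.sgnVec e = 0 := by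
      rw [Cycle.sgnVec]
      exact Finset.sum_eq_zero fun j _ => if_neg (hed j)
    rcases huniq σ'' with hu | hu
    · rw [hu] at hz; exact he hz
    · rw [hu] at hz; simp only [Pi.neg_apply, neg_eq_zero] at hz; exact he hz
  have hedge : ∀ j : Fin (σ.k + 3), (if j = i then e' else σ.edge j) ≠ e := by
    intro j
    by_cases hji : j = i
    · rw [if_pos hji]; exact hne
    · rw [if_neg hji]; exact fun hje => hji (edge_once σ (hje.trans hi.symm))
  rcases hpar with ⟨hps, hpt⟩ | ⟨hps, hpt⟩
  · refine key
      { k := σ.k, vert := σ.vert, vertInj := σ.vertInj,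
        edge := fun j => if j = i then e' else σ.edge j,
        dir := σ.dir,
        pos_compat := ?_, neg_compat := ?_ } hedge
    · intro j hj
      obtain ⟨h1, h2⟩ := σ.pos_compat j hj
      by_cases hji : j = i
      · subst hji
        simp only [if_pos rfl]
        rw [hi] at h1 h2
        exact ⟨hpt.trans h1, hps.trans h2⟩
      · simp only [if_neg hji]
        exact ⟨h1, h2⟩
    · intro j hj
      obtain ⟨h1, h2⟩ := σ.neg_compat j hj
      by_cases hji : j = i
      · subst hji
        simp only [if_pos rfl]
        rw [hi] at h1 h2
        exact ⟨hps.trans h1, hpt.trans h2⟩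
      · simp only [if_neg hji]
        exact ⟨h1, h2⟩
  · refine key
      { k := σ.k, vert := σ.vert, vertInj := σ.vertInj,
        edge := fun j => if j = i then e' else σ.edge j,
        dir := fun j => if j = i then !σ.dir i else σ.dir j,
        pos_compat := ?_, neg_compat := ?_ } hedge
    · intro j hj
      by_cases hji : j = i
      · subst hji
        simp only [if_pos rfl] at hj ⊢
        have hdj : σ.dir j = false := by
          cases h : σ.dir j
          · rfl
          · rw [h] at hj; simp at hj
        obtain ⟨h1, h2⟩ := σ.neg_compat j hdj
        rw [hi] at h1 h2
        exact ⟨hpt.trans h1, hps.trans h2⟩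
      · simp only [if_neg hji] at hj ⊢
        exact σ.pos_compat j hj
    · intro j hj
      by_cases hji : j = i
      · subst hji
        simp only [if_pos rfl] at hj ⊢
        have hdj : σ.dir j = true := by
          cases h : σ.dir j
          · rw [h] at hj; simp at hj
          · rfl
        obtain ⟨h1, h2⟩ := σ.pos_compat j hdj
        rw [hi] at h1 h2
        exact ⟨hps.trans h1, hpt.trans h2⟩
      · simp only [if_neg hji] at hj ⊢
        exact σ.neg_compat j hj




/-- Sign coherence of a vector on parallel edges. -/
def Coh (G : OGraph n m) (d : Fin m → ℝ) : Prop := ∀ e e',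
  (G.src e = G.src e' ∧ G.tgt e = G.tgt e' → 0 ≤ d e * d e') ∧
  (G.src e = G.tgt e' ∧ G.tgt e = G.src e' → d e * d e' ≤ 0)

/-- Two nodes joined by a support edge. -/
def SuppAdj (G : OGraph n m) (d : Fin m → ℝ) (i j : Fin n) : Prop :=
  ∃ e, d e ≠ 0 ∧ ((G.src e = i ∧ G.tgt e = j) ∨ (G.src e = j ∧ G.tgt e = i))

lemma suppAdj_symm {G : OGraph n m} {d : Fin m → ℝ} {i j : Fin n}
    (h : SuppAdj G d i j) : SuppAdj G d j i := by
  obtain ⟨e, he, ho⟩ := h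
  exact ⟨e, he, ho.symm⟩

lemma suppAdj_ne {G : OGraph n m} {d : Fin m → ℝ} {i j : Fin n}
    (h : SuppAdj G d i j) : i ≠ j := by
  obtain ⟨e, _, ho⟩ := h
  rcases ho with ⟨hs, ht⟩ | ⟨hs, ht⟩
  · exact fun hij => G.noLoop e (hs.trans (hij.trans ht.symm))
  · exact fun hij => G.noLoop e (hs.trans (hij.symm.trans ht.symm))

lemma two_neighbors {G : OGraph n m} {d : Fin m → ℝ}
    (hker : G.inc.mulVec d = 0) (hcoh : Coh G d) {i j : Fin n}
    (hij : SuppAdj G d i j) : ∃ j', SuppAdj G d i j' ∧ j' ≠ j := by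
  by_contra hc
  push_neg at hc
  obtain ⟨e0, he0, ho0⟩ := hij
  have hne : i ≠ j := suppAdj_ne ⟨e0, he0, ho0⟩
  -- orientation of e0 with respect to (i, j)
  have ori0 : (G.tgt e0 = i ∧ G.src e0 = j) ∨ (G.src e0 = i ∧ G.tgt e0 = j) := by
    rcases ho0 with ⟨hs, ht⟩ | ⟨hs, ht⟩
    · exact Or.inr ⟨hs, ht⟩
    · exact Or.inl ⟨ht, hs⟩
  set t : Fin m → ℝ := fun e => G.inc i e * d e with ht
  have hrow : ∑ e, t e = 0 := by
    have := congrFun hker i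
    rw [Pi.zero_apply, Matrix.mulVec, dotProduct] at this
    exact this
  -- every edge in the support incident to i goes to j, with coherent contribution
  have hori : ∀ e, t e ≠ 0 →
      (G.tgt e = i ∧ G.src e = j) ∨ (G.src e = i ∧ G.tgt e = j) := by
    intro e hte
    have hde : d e ≠ 0 := fun h => hte (by rw [ht]; simp [h])
    have hinc : G.inc i e ≠ 0 := fun h => hte (by rw [ht]; simp [h])
    rw [inc, Matrix.of_apply] at hinc
    by_cases h1 : i = G.tgt e
    · left
      refine ⟨h1.symm, hc (G.src e) ⟨e, hde, Or.inr ⟨rfl, h1.symm⟩⟩⟩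
    · rw [if_neg h1] at hinc
      by_cases h2 : i = G.src e
      · right
        refine ⟨h2.symm, hc (G.tgt e) ⟨e, hde, Or.inl ⟨h2.symm, rfl⟩⟩⟩
      · rw [if_neg h2] at hinc
        exact absurd rfl hinc
  have hinc_tgt : ∀ e, G.tgt e = i → G.src e = j → G.inc i e = 1 := by
    intro e h1 h2
    rw [inc, Matrix.of_apply, if_pos h1.symm]
  have hinc_src : ∀ e, G.src e = i → G.tgt e = j → G.inc i e = -1 := by
    intro e h1 h2
    rw [inc, Matrix.of_apply, if_neg (fun hh => hne (hh.trans h2)), if_pos h1.symm]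
  have ht0 : t e0 ≠ 0 := by
    rcases ori0 with ⟨h1, h2⟩ | ⟨h1, h2⟩
    · rw [ht]; simp only [hinc_tgt e0 h1 h2, one_mul]; exact he0
    · rw [ht]; simp only [hinc_src e0 h1 h2, neg_mul, one_mul, neg_ne_zero]; exact he0
  have hsame : ∀ e, 0 ≤ t e * t e0 := by
    intro e
    by_cases hte : t e = 0
    · rw [hte, zero_mul]
    have horie := hori e hte
    rcases horie with ⟨h1, h2⟩ | ⟨h1, h2⟩ <;> rcases ori0 with ⟨h3, h4⟩ | ⟨h3, h4⟩
    · -- both tgt = i : co-oriented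
      have := (hcoh e e0).1 ⟨h2.trans h4.symm, h1.trans h3.symm⟩
      rw [ht]
      simp only [hinc_tgt e h1 h2, hinc_tgt e0 h3 h4, one_mul]
      exact this
    · -- e : tgt = i, e0 : src = i : anti-oriented
      have := (hcoh e e0).2 ⟨h2.trans h4.symm, h1.trans h3.symm⟩
      rw [ht]
      simp only [hinc_tgt e h1 h2, hinc_src e0 h3 h4, one_mul, neg_mul, mul_neg]
      linarith
    · have := (hcoh e e0).2 ⟨h1.trans h3.symm, h2.trans h4.symm⟩
      rw [ht]
      simp only [hinc_src e h1 h2, hinc_tgt e0 h3 h4, one_mul, neg_mul, neg_one_mul]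
      linarith
    · have := (hcoh e e0).1 ⟨h1.trans h3.symm, h2.trans h4.symm⟩
      rw [ht]
      simp only [hinc_src e h1 h2, hinc_src e0 h3 h4, neg_mul, one_mul, neg_neg, mul_neg]
      linarith
  rcases lt_or_gt_of_ne ht0 with hlt | hgt
  · -- t e0 < 0 : all terms nonpositive
    have hnp : ∀ e, t e ≤ 0 := by
      intro e
      nlinarith [hsame e]
    have h1 : -(t e0) ≤ ∑ e, -(t e) :=
      Finset.single_le_sum (f := fun e => -(t e)) (fun e _ => neg_nonneg.mpr (hnp e)) (Finset.mem_univ e0)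
    rw [Finset.sum_neg_distrib, hrow, neg_zero] at h1
    linarith
  · have hnn : ∀ e, 0 ≤ t e := by
      intro e
      nlinarith [hsame e]
    have h1 : t e0 ≤ ∑ e, t e :=
      Finset.single_le_sum (fun e _ => hnn e) (Finset.mem_univ e0)
    rw [hrow] at h1
    linarith




lemma support_cycle {d : Fin m → ℝ} (hker : G.inc.mulVec d = 0) (hcoh : Coh G d)
    (hd : d ≠ 0) : ∃ σ' : G.Cycle, ∀ i, d (σ'.edge i) ≠ 0 := by
  obtain ⟨e0, he0⟩ : ∃ e, d e ≠ 0 := by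
    by_contra hcon
    push_neg at hcon
    exact hd (funext hcon)
  classical
  -- the non-backtracking walk
  let step : Fin n → Fin n → Fin n := fun p c =>
    if h : SuppAdj G d c p then (two_neighbors hker hcoh h).choose else c
  let walk : ℕ → Fin n × Fin n := fun t =>
    Nat.rec (G.src e0, G.tgt e0) (fun _ pr => (pr.2, step pr.1 pr.2)) t
  have hw1 : ∀ t, (walk (t + 1)).1 = (walk t).2 := fun t => rfl
  have hinv : ∀ t, SuppAdj G d (walk t).1 (walk t).2 := by
    intro t
    induction t with
    | zero => exact ⟨e0, he0, Or.inl ⟨rfl, rfl⟩⟩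
    | succ t ih =>
      have hs : SuppAdj G d (walk t).2 (walk t).1 := suppAdj_symm ih
      show SuppAdj G d (walk t).2 (step (walk t).1 (walk t).2)
      rw [show step (walk t).1 (walk t).2 = (two_neighbors hker hcoh hs).choose from dif_pos hs]
      exact (two_neighbors hker hcoh hs).choose_spec.1
  have hback : ∀ t, (walk (t + 1)).2 ≠ (walk t).1 := by
    intro t
    have hs : SuppAdj G d (walk t).2 (walk t).1 := suppAdj_symm (hinv t)
    show step (walk t).1 (walk t).2 ≠ (walk t).1
    rw [show step (walk t).1 (walk t).2 = (two_neighbors hker hcoh hs).choose from dif_pos hs]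
    exact (two_neighbors hker hcoh hs).choose_spec.2
  set w : ℕ → Fin n := fun t => (walk t).1 with hwdef
  have hP : ∀ t, SuppAdj G d (w t) (w (t + 1)) := fun t => hinv t
  have hb2 : ∀ t, w (t + 2) ≠ w t := fun t => hback t
  have hb1 : ∀ t, w (t + 1) ≠ w t := fun t => (suppAdj_ne (hP t)).symm
  -- pigeonhole : some repetition among w 0, ..., w n
  obtain ⟨A, B, hAB, hABeq⟩ := Fintype.exists_ne_map_eq_of_card_lt
    (fun t : Fin (n + 1) => w t.val) (by simp)
  have hex : ∃ t2, ∃ t1, t1 < t2 ∧ w t1 = w t2 := by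
    rcases lt_or_gt_of_ne (fun h => hAB (Fin.ext h) : A.val ≠ B.val) with hlt | hgt
    · exact ⟨B.val, A.val, hlt, hABeq⟩
    · exact ⟨A.val, B.val, hgt, hABeq.symm⟩
  set t2 := Nat.find hex with ht2def
  obtain ⟨t1, ht1lt, ht1eq⟩ := Nat.find_spec hex
  rw [← ht2def] at ht1lt ht1eq
  have hinj : ∀ s s', s < t2 → s' < t2 → w s = w s' → s = s' := by
    intro s s' hs hs' heq
    rcases lt_trichotomy s s' with h | h | h
    · exact absurd ⟨s, h, heq⟩ (Nat.find_min hex hs')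
    · exact h
    · exact absurd ⟨s', h, heq.symm⟩ (Nat.find_min hex hs)
  set L := t2 - t1 with hLdef
  have hL3 : 3 ≤ L := by
    rcases Nat.lt_or_ge L 3 with hL | hL
    · interval_cases L
      · omega
      · exfalso
        have : t2 = t1 + 1 := by omega
        rw [this] at ht1eq
        exact hb1 t1 ht1eq.symm
      · exfalso
        have : t2 = t1 + 2 := by omega
        rw [this] at ht1eq
        exact hb2 t1 ht1eq.symm
    · exact hL
  set k := L - 3 with hkdef
  have hk3 : k + 3 = L := by omega
  have hvlt : ∀ i : Fin (k + 3), t1 + i.val < t2 := by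
    intro i
    have := i.isLt
    omega
  set vert : Fin (k + 3) → Fin n := fun i => w (t1 + i.val) with hvert
  have hvinj : Function.Injective vert := by
    intro i j hij
    have := hinj (t1 + i.val) (t1 + j.val) (hvlt i) (hvlt j) hij
    exact Fin.ext (by omega)
  have hsucc : ∀ i : Fin (k + 3), vert (i + 1) = w (t1 + i.val + 1) := by
    intro i
    have hval : ((i + 1 : Fin (k + 3))).val =
        if k + 3 ≤ i.val + 1 then i.val + 1 - (k + 3) else i.val + 1 := by
      rw [Fin.val_add_eq_ite, Fin.val_one]
    by_cases hlt : i.val + 1 < k + 3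
    · rw [hvert]
      simp only []
      rw [hval, if_neg (by omega), ← Nat.add_assoc]
    · have hieq : i.val + 1 = k + 3 := by have := i.isLt; omega
      rw [hvert]
      simp only []
      rw [hval, if_pos (by omega)]
      have h0 : i.val + 1 - (k + 3) = 0 := by omega
      rw [h0, Nat.add_zero]
      have ht2e : t1 + i.val + 1 = t2 := by omega
      rw [ht2e, ← ht1eq]
  have hPvert : ∀ i : Fin (k + 3), SuppAdj G d (vert i) (vert (i + 1)) := by
    intro i
    rw [hsucc i]
    exact hP (t1 + i.val)
  set edgef : Fin (k + 3) → Fin m := fun i => (hPvert i).choose with hedgef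
  have hde : ∀ i, d (edgef i) ≠ 0 := fun i => (hPvert i).choose_spec.1
  have hori : ∀ i, (G.src (edgef i) = vert i ∧ G.tgt (edgef i) = vert (i + 1)) ∨
      (G.src (edgef i) = vert (i + 1) ∧ G.tgt (edgef i) = vert i) :=
    fun i => (hPvert i).choose_spec.2
  have hvne : ∀ i : Fin (k + 3), vert (i + 1) ≠ vert i :=
    fun i h => fin_succ_ne i (hvinj h)
  set dirf : Fin (k + 3) → Bool := fun i => if G.tgt (edgef i) = vert i then true else false
    with hdirf
  have hpos : ∀ i, dirf i = true → G.tgt (edgef i) = vert i ∧ G.src (edgef i) = vert (i + 1) := by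
    intro i hi
    by_cases hcond : G.tgt (edgef i) = vert i
    · refine ⟨hcond, ?_⟩
      rcases hori i with ⟨h1, h2⟩ | ⟨h1, h2⟩
      · exact absurd (hcond.symm.trans h2).symm (hvne i)
      · exact h1
    · rw [hdirf] at hi
      simp only [if_neg hcond] at hi
      exact absurd hi (by simp)
  have hneg : ∀ i, dirf i = false → G.src (edgef i) = vert i ∧ G.tgt (edgef i) = vert (i + 1) := by
    intro i hi
    by_cases hcond : G.tgt (edgef i) = vert i
    · rw [hdirf] at hi
      simp only [if_pos hcond] at hi
      exact absurd hi (by simp)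
    · rcases hori i with ⟨h1, h2⟩ | ⟨h1, h2⟩
      · exact ⟨h1, h2⟩
      · exact absurd h2 hcond
  exact ⟨⟨k, vert, hvinj, edgef, dirf, hpos, hneg⟩, hde⟩




lemma ker_span (σ : G.Cycle)
    (huniq : ∀ σ' : G.Cycle, σ'.sgnVec = σ.sgnVec ∨ σ'.sgnVec = -σ.sgnVec) :
    ∀ N (d : Fin m → ℝ), (Finset.univ.filter (fun e => d e ≠ 0)).card ≤ N →
    G.inc.mulVec d = 0 → Coh G d → ∃ c : ℝ, ∀ e, d e = c * σ.sgnVec e := by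
  intro N
  induction N with
  | zero =>
    intro d hcard _ _
    refine ⟨0, fun e => ?_⟩
    rw [Nat.le_zero, Finset.card_eq_zero] at hcard
    have : d e = 0 := by
      by_contra hde
      have : e ∈ Finset.univ.filter (fun e => d e ≠ 0) := by
        simp [hde]
      rw [hcard] at this
      exact absurd this (Finset.notMem_empty e)
    rw [this, zero_mul]
  | succ N ih =>
    intro d hcard hker hcoh
    by_cases hd0 : d = 0
    · exact ⟨0, fun e => by rw [hd0, Pi.zero_apply, zero_mul]⟩
    obtain ⟨σ', hσ'⟩ := support_cycle hker hcoh hd0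
    have hu := huniq σ'
    have hsupp : ∀ e, σ.sgnVec e ≠ 0 → d e ≠ 0 := by
      intro e hv
      have hσe : σ'.sgnVec e ≠ 0 := by
        rcases hu with hu | hu
        · rw [hu]; exact hv
        · rw [hu]; simpa using hv
      obtain ⟨i, hi⟩ := sgnVec_support σ' hσe
      rw [← hi]
      exact hσ' i
    set e0 := σ'.edge 0 with he0def
    have hv0 : σ.sgnVec e0 ≠ 0 := by
      have h1 : σ'.sgnVec e0 ≠ 0 := sgnVec_edge_ne σ' 0
      rcases hu with hu | hu
      · rw [hu] at h1; exact h1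
      · rw [hu] at h1; simpa using h1
    have hd0' : d e0 ≠ 0 := hσ' 0
    set c0 := d e0 / σ.sgnVec e0 with hc0def
    set d' : Fin m → ℝ := fun e => d e - c0 * σ.sgnVec e with hd'def
    have hd'e0 : d' e0 = 0 := by
      rw [hd'def]
      simp only []
      rw [hc0def, div_mul_cancel₀ _ hv0, sub_self]
    have hker' : G.inc.mulVec d' = 0 := by
      have heq : d' = d - c0 • σ.sgnVec := by
        funext e
        simp [hd'def, smul_eq_mul]
      rw [heq, Matrix.mulVec_sub, Matrix.mulVec_smul, hker, inc_mulVec_sgnVec, smul_zero,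
        sub_zero]
    have hzero : ∀ e, d e = 0 → d' e = 0 := by
      intro e hde
      have hve : σ.sgnVec e = 0 := by
        by_contra hv
        exact (hsupp e hv) hde
      rw [hd'def]
      simp [hde, hve]
    have hcoh' : Coh G d' := by
      intro e e'
      constructor
      · intro hpar
        by_cases hee : e = e'
        · subst hee; exact mul_self_nonneg _
        · have hve : σ.sgnVec e = 0 := by
            by_contra hv
            exact no_parallel σ huniq hv (fun h => hee h.symm) (Or.inl ⟨hpar.1.symm, hpar.2.symm⟩)
          have hve' : σ.sgnVec e' = 0 := by
            by_contra hv
            exact no_parallel σ huniq hv hee (Or.inl ⟨hpar.1, hpar.2⟩)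
          have h1 : d' e = d e := by rw [hd'def]; simp [hve]
          have h2 : d' e' = d e' := by rw [hd'def]; simp [hve']
          rw [h1, h2]
          exact (hcoh e e').1 hpar
      · intro hpar
        by_cases hee : e = e'
        · exfalso
          subst hee
          exact G.noLoop e hpar.1
        · have hve : σ.sgnVec e = 0 := by
            by_contra hv
            exact no_parallel σ huniq hv (fun h => hee h.symm) (Or.inr ⟨hpar.2.symm, hpar.1.symm⟩)
          have hve' : σ.sgnVec e' = 0 := by
            by_contra hv
            exact no_parallel σ huniq hv hee (Or.inr ⟨hpar.1, hpar.2⟩)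
          have h1 : d' e = d e := by rw [hd'def]; simp [hve]
          have h2 : d' e' = d e' := by rw [hd'def]; simp [hve']
          rw [h1, h2]
          exact (hcoh e e').2 hpar
      -- subset and cardinality
    have hss : Finset.univ.filter (fun e => d' e ≠ 0) ⊆
        (Finset.univ.filter (fun e => d e ≠ 0)).erase e0 := by
      intro e he
      rw [Finset.mem_filter] at he
      rw [Finset.mem_erase, Finset.mem_filter]
      refine ⟨fun h => he.2 (h ▸ hd'e0), Finset.mem_univ e, fun h => he.2 (hzero e h)⟩
    have he0mem : e0 ∈ Finset.univ.filter (fun e => d e ≠ 0) := by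
      simp [hd0']
    have hcard' : (Finset.univ.filter (fun e => d' e ≠ 0)).card ≤ N := by
      have h1 := Finset.card_le_card hss
      rw [Finset.card_erase_of_mem he0mem] at h1
      have h2 : 1 ≤ (Finset.univ.filter (fun e => d e ≠ 0)).card :=
        Finset.card_pos.mpr ⟨e0, he0mem⟩
      omega
    obtain ⟨c', hc'⟩ := ih d' hcard' hker' hcoh'
    refine ⟨c' + c0, fun e => ?_⟩
    have := hc' e
    rw [hd'def] at this
    simp only [] at this
    linarith [this]
  

end LoopAux

open LoopAux OGraph

/-- In a unicyclic graph with strictly increasing flow functions,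
loop flows are strictly increasing with respect to winding numbers. -/
theorem loop_flow_monotone_winding {n m : ℕ} (G : OGraph n m)
    (hconn : G.Connected)
    (σ : G.Cycle)
    (huniq : ∀ σ' : G.Cycle, σ'.sgnVec = σ.sgnVec ∨ σ'.sgnVec = -σ.sgnVec)
    (a : Fin m → ℝ) (ha : ∀ e, 0 < a e)
    (h : Fin m → ℝ → ℝ) (hflow : ∀ e, IsFlowFun (h e))
    (p : Fin n → ℝ) (hp : ∑ i, p i = 0)
    (γ : ℝ) (hγ : γ ∈ Set.Ico 0 π)
    (hmono : ∀ e, StrictMonoOn (h e) (Set.Icc (-γ) γ))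
    (f g : Fin m → ℝ) (φ ψ : Fin n → Real.Angle)
    (h1 : IsFlowSol G a h p γ f φ) (h2 : IsFlowSol G a h p γ g ψ) :
    σ.winding φ > σ.winding ψ ↔ ∑ e, σ.sgnVec e * f e > ∑ e, σ.sgnVec e * g e := by
  obtain ⟨hγ0, hγπ⟩ := hγ
  obtain ⟨hBf, hf, hxb⟩ := h1
  obtain ⟨hBg, hg, hyb⟩ := h2
  set x : Fin m → ℝ := G.edgeDiff φ with hxdef
  set y : Fin m → ℝ := G.edgeDiff ψ with hydef
  have hbφ : ∀ e, |x e| < π := fun e => lt_of_le_of_lt (hxb e) hγπ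
  have hbψ : ∀ e, |y e| < π := fun e => lt_of_le_of_lt (hyb e) hγπ
  -- per-edge sign dictionary
  have key : ∀ e, (0 < f e - g e ↔ y e < x e) ∧ (f e - g e = 0 ↔ x e = y e) ∧
      (f e - g e < 0 ↔ x e < y e) := by
    intro e
    have hfg : f e - g e = a e * (h e (x e) - h e (y e)) := by rw [hf e, hg e]; ring
    have hmx := hmono e
    have hxm : x e ∈ Set.Icc (-γ) γ := Set.mem_Icc.mpr (abs_le.mp (hxb e))
    have hym : y e ∈ Set.Icc (-γ) γ := Set.mem_Icc.mpr (abs_le.mp (hyb e))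
    have hae := ha e
    refine ⟨⟨fun hpos => ?_, fun hlt => ?_⟩, ⟨fun h0 => ?_, fun hxy => ?_⟩,
      ⟨fun hneg => ?_, fun hlt => ?_⟩⟩
    · exact (hmx.lt_iff_lt hym hxm).mp (by nlinarith)
    · have := (hmx.lt_iff_lt hym hxm).mpr hlt
      nlinarith
    · have hdiff : h e (x e) = h e (y e) := by
        rcases mul_eq_zero.mp (hfg ▸ h0) with hc | hc
        · exact absurd hc (ne_of_gt hae)
        · linarith
      exact hmx.injOn hxm hym hdiff
    · rw [hfg, hxy]; ring
    · exact (hmx.lt_iff_lt hxm hym).mp (by nlinarith)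
    · have := (hmx.lt_iff_lt hxm hym).mpr hlt
      nlinarith
  -- the difference of the two flows
  set d : Fin m → ℝ := fun e => f e - g e with hddef
  have hkerd : G.inc.mulVec d = 0 := by
    have heq : d = f - g := funext fun e => rfl
    rw [heq, Matrix.mulVec_sub, hBf, hBg, sub_self]
  -- edgeDiff determined by endpoints
  have hsame : ∀ (θ : Fin n → Real.Angle) e e', G.src e = G.src e' → G.tgt e = G.tgt e' →
      G.edgeDiff θ e = G.edgeDiff θ e' := by
    intro θ e e' hs ht
    rw [edgeDiff, edgeDiff, hs, ht]
  have hflip : ∀ (θ : Fin n → Real.Angle) e e', (∀ e'', |G.edgeDiff θ e''| < π) →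
      G.src e = G.tgt e' → G.tgt e = G.src e' →
      G.edgeDiff θ e' = - G.edgeDiff θ e := by
    intro θ e e' hb hs ht
    have : G.edgeDiff θ e' = dcc (θ (G.src e)) (θ (G.tgt e)) := by
      rw [edgeDiff, ← hs, ← ht]
    rw [this]
    rw [edgeDiff]
    exact dcc_flip (hb e)
  have hcohd : Coh G d := by
    intro e e'
    constructor
    · rintro ⟨hs, ht⟩
      show 0 ≤ (f e - g e) * (f e' - g e')
      have hxe : x e = x e' := hsame φ e e' hs ht
      have hye : y e = y e' := hsame ψ e e' hs ht
      rcases lt_trichotomy (x e) (y e) with hlt | heq | hgt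
      · have hd1 := (key e).2.2.mpr hlt
        have hd2 := (key e').2.2.mpr (by rw [← hxe, ← hye]; exact hlt)
        nlinarith
      · have hd1 := (key e).2.1.mpr heq
        have hd2 := (key e').2.1.mpr (by rw [← hxe, ← hye]; exact heq)
        rw [hd1, hd2, mul_zero]
      · have hd1 := (key e).1.mpr hgt
        have hd2 := (key e').1.mpr (by rw [← hxe, ← hye]; exact hgt)
        nlinarith
    · rintro ⟨hs, ht⟩
      show (f e - g e) * (f e' - g e') ≤ 0
      have hxe : x e' = -x e := hflip φ e e' hbφ hs ht
      have hye : y e' = -y e := hflip ψ e e' hbψ hs ht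
      rcases lt_trichotomy (x e) (y e) with hlt | heq | hgt
      · have hd1 := (key e).2.2.mpr hlt
        have hd2 := (key e').1.mpr (by rw [hxe, hye]; linarith)
        nlinarith
      · have hd1 := (key e).2.1.mpr heq
        rw [hd1, zero_mul]
      · have hd1 := (key e).1.mpr hgt
        have hd2 := (key e').2.2.mpr (by rw [hxe, hye]; linarith)
        nlinarith
  obtain ⟨c, hc⟩ := ker_span σ huniq (Finset.univ.filter (fun e => d e ≠ 0)).card d
    le_rfl hkerd hcohd
  -- positivity of the norm of the cycle vector
  have hvstar : σ.sgnVec (σ.edge 0) ≠ 0 := sgnVec_edge_ne σ 0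
  have hS : 0 < ∑ e, σ.sgnVec e ^ 2 :=
    Finset.sum_pos' (fun e _ => sq_nonneg _)
      ⟨σ.edge 0, Finset.mem_univ _, pow_two_pos_of_ne_zero hvstar⟩
  -- RHS iff
  have hRHS : (∑ e, σ.sgnVec e * f e > ∑ e, σ.sgnVec e * g e) ↔ 0 < c := by
    have hsub : (∑ e, σ.sgnVec e * f e) - ∑ e, σ.sgnVec e * g e = c * ∑ e, σ.sgnVec e ^ 2 := by
      rw [← Finset.sum_sub_distrib, Finset.mul_sum]
      refine Finset.sum_congr rfl fun e _ => ?_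
      have hce : f e - g e = c * σ.sgnVec e := hc e
      have hfe : f e = g e + c * σ.sgnVec e := by linarith
      rw [hfe]; ring
    constructor
    · intro hgt
      have h0 : 0 < c * ∑ e, σ.sgnVec e ^ 2 := by rw [← hsub]; linarith
      nlinarith
    · intro hcpos
      have h0 : 0 < c * ∑ e, σ.sgnVec e ^ 2 := mul_pos hcpos hS
      rw [← hsub] at h0
      linarith
  -- LHS iff
  have hwindφ : σ.winding φ = (1 / (2 * π)) * ∑ e, σ.sgnVec e * x e := winding_eq σ φ hbφ
  have hwindψ : σ.winding ψ = (1 / (2 * π)) * ∑ e, σ.sgnVec e * y e := winding_eq σ ψ hbψ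
  have hZ : (∑ e, σ.sgnVec e * x e) - ∑ e, σ.sgnVec e * y e =
      ∑ e, σ.sgnVec e * (x e - y e) := by
    rw [← Finset.sum_sub_distrib]
    exact Finset.sum_congr rfl fun e _ => by ring
  have hterm_pos : 0 < c → ∀ e, 0 ≤ σ.sgnVec e * (x e - y e) := by
    intro hcpos e
    have hce : f e - g e = c * σ.sgnVec e := hc e
    rcases lt_trichotomy (σ.sgnVec e) 0 with hv | hv | hv
    · have h3 : f e - g e < 0 := by nlinarith
      have h4 := (key e).2.2.mp h3
      nlinarith
    · have h3 : f e - g e = 0 := by rw [hce, hv, mul_zero]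
      have h4 := (key e).2.1.mp h3
      rw [h4, sub_self, mul_zero]
    · have h3 : 0 < f e - g e := by nlinarith
      have h4 := (key e).1.mp h3
      nlinarith
  have hterm_star : 0 < c → 0 < σ.sgnVec (σ.edge 0) * (x (σ.edge 0) - y (σ.edge 0)) := by
    intro hcpos
    have hce : f (σ.edge 0) - g (σ.edge 0) = c * σ.sgnVec (σ.edge 0) := hc _
    rcases lt_trichotomy (σ.sgnVec (σ.edge 0)) 0 with hv | hv | hv
    · have h3 : f (σ.edge 0) - g (σ.edge 0) < 0 := by nlinarith
      have h4 := (key (σ.edge 0)).2.2.mp h3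
      nlinarith
    · exact absurd hv hvstar
    · have h3 : 0 < f (σ.edge 0) - g (σ.edge 0) := by nlinarith
      have h4 := (key (σ.edge 0)).1.mp h3
      nlinarith
  have hterm_nonpos : c < 0 → ∀ e, σ.sgnVec e * (x e - y e) ≤ 0 := by
    intro hcneg e
    have hce : f e - g e = c * σ.sgnVec e := hc e
    rcases lt_trichotomy (σ.sgnVec e) 0 with hv | hv | hv
    · have h3 : 0 < f e - g e := by nlinarith
      have h4 := (key e).1.mp h3
      nlinarith
    · have h3 : f e - g e = 0 := by rw [hce, hv, mul_zero]
      have h4 := (key e).2.1.mp h3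
      rw [h4, sub_self, mul_zero]
    · have h3 : f e - g e < 0 := by nlinarith
      have h4 := (key e).2.2.mp h3
      nlinarith
  have hzeroc : c = 0 → ∀ e, x e = y e := by
    intro h0 e
    have hce : f e - g e = c * σ.sgnVec e := hc e
    exact (key e).2.1.mp (by rw [hce, h0, zero_mul])
  have hLHS : (σ.winding φ > σ.winding ψ) ↔ 0 < c := by
    rw [gt_iff_lt, hwindφ, hwindψ]
    have hfac : 0 < 1 / (2 * π) := by positivity
    rw [mul_lt_mul_iff_right₀ hfac]
    constructor
    · intro hgt
      rcases lt_trichotomy c 0 with hcv | hcv | hcv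
      · exfalso
        have h5 := Finset.sum_nonpos (fun e (_ : e ∈ Finset.univ) => hterm_nonpos hcv e)
        have h4 : 0 < (∑ e, σ.sgnVec e * x e) - ∑ e, σ.sgnVec e * y e := by linarith
        rw [hZ] at h4
        linarith
      · exfalso
        have h4 : (∑ e, σ.sgnVec e * x e) = ∑ e, σ.sgnVec e * y e :=
          Finset.sum_congr rfl fun e _ => by rw [hzeroc hcv e]
        linarith
      · exact hcv
    · intro hcpos
      have h4 : 0 < ∑ e, σ.sgnVec e * (x e - y e) :=
        Finset.sum_pos' (fun e _ => hterm_pos hcpos e)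
          ⟨σ.edge 0, Finset.mem_univ _, hterm_star hcpos⟩
      rw [← hZ] at h4
      linarith
  exact hLHS.trans hRHS.symm


end
end

section
/- Let G be an undirected weighted connected graph with incidence matrix B ∈ ℝ^{n×m} and diagonal weight matrix 𝒜 ∈ ℝ^{m×m} with positive diagonal, let D ∈ ℝ^{m×m} be a positive definite diagonal matrix, and let 𝒫_D = I_m − D𝒜Bᵀ(B D𝒜 Bᵀ)†B be the D-weighted cycle projection. Then: (i) 𝒫_D is idempotent; (ii) its eigenvalues are 0 and 1 with algebraic (and geometric) multiplicities n−1 and m−n+1, respectively; (iii) Ker(𝒫_D D𝒜) = Img(Bᵀ). -/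
open scoped BigOperators
open Real Matrix

noncomputable section

/-! Write `W = D𝒜` and `L = B W Bᵀ`. Since `(X B) W (X B)ᵀ = X L Xᵀ` and `W` is positive, the
Penrose equations `L N L = L` and `(N L)ᵀ = N L` force `L N B = B` and `Bᵀ N L = Bᵀ`. Hence
`Q = W Bᵀ N B` is idempotent with `rank Q = rank B`, which is `n - 1` because connectedness makes
`ker Bᵀ` the constant vectors. So `𝒫_D = 1 - Q` is an idempotent with kernel `range Q` and range
`ker Q`; the splitting of the space into range and kernel of an idempotent gives its eigenvalues and
characteristic polynomial. Finally `𝒫_D W x = 0` says `W x = W Bᵀ (N B W x)`, i.e. `x ∈ range Bᵀ`. -/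

namespace Matrix

variable {ι κ ν : Type*} [Fintype κ] [DecidableEq κ] {w : κ → ℝ}

theorem eq_zero_of_mul_diagonal_mul_transpose_eq_zero (hw : ∀ e, 0 < w e)
    {S : Matrix ι κ ℝ} (h : S * diagonal w * Sᵀ = 0) : S = 0 := by
  ext i e
  have hii : ∑ e, w e * S i e ^ 2 = 0 := by
    have := congrFun (congrFun h i) i
    simp only [mul_apply (M := S * diagonal w), mul_diagonal, transpose_apply, zero_apply] at this
    simpa only [sq, mul_comm, mul_left_comm] using this
  have := (Finset.sum_eq_zero_iff_of_nonneg fun e _ => mul_nonneg (hw e).le (sq_nonneg _)).1 hii e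
    (Finset.mem_univ e)
  simpa [(hw e).ne'] using this

theorem mul_eq_zero_of_mul_gram_mul_transpose_eq_zero [Fintype ι] (hw : ∀ e, 0 < w e)
    {B : Matrix ι κ ℝ} {X : Matrix ν ι ℝ} (h : X * (B * diagonal w * Bᵀ) * Xᵀ = 0) :
    X * B = 0 :=
  eq_zero_of_mul_diagonal_mul_transpose_eq_zero hw <| by
    simpa only [transpose_mul, Matrix.mul_assoc] using h

end Matrix

namespace Module.End

variable {K V : Type*} [Field K] [AddCommGroup V] [Module K V] {f : End K V}

theorem eigenspace_one_eq_range_of_isIdempotentElem (hf : IsIdempotentElem f) :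
    f.eigenspace 1 = LinearMap.range f := by
  ext x
  rw [mem_eigenspace_iff, one_smul, LinearMap.IsIdempotentElem.mem_range_iff hf]

theorem HasEigenvalue.eq_zero_or_eq_one_of_isIdempotentElem (hf : IsIdempotentElem f) {μ : K}
    (hμ : f.HasEigenvalue μ) : μ = 0 ∨ μ = 1 :=
  hf.spectrum_subset K hμ.mem_spectrum

theorem charpoly_eq_of_isIdempotentElem [FiniteDimensional K V] (hf : IsIdempotentElem f) :
    f.charpoly = Polynomial.X ^ Module.finrank K (LinearMap.ker f) *
      (Polynomial.X - 1) ^ Module.finrank K (LinearMap.range f) := by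
  let e := Submodule.prodEquivOfIsCompl _ _ (LinearMap.IsIdempotentElem.isCompl hf)
  have hcomm : f ∘ₗ e.toLinearMap = e.toLinearMap ∘ₗ (1 : End K _).prodMap 0 := by
    ext x
    · simp [e, (LinearMap.IsIdempotentElem.mem_range_iff hf).1 x.2]
    · simp [e]
  have hconj : e.conj ((1 : End K (LinearMap.range f)).prodMap 0) = f := by
    rw [LinearEquiv.conj_apply, ← hcomm, LinearMap.comp_assoc]
    simp
  conv_lhs => rw [← hconj]
  rw [LinearEquiv.charpoly_conj, LinearMap.charpoly_prodMap, LinearMap.charpoly_one,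
    LinearMap.charpoly_zero, mul_comm]

end Module.End

namespace Matrix

variable {K ι : Type*} [Field K] [Fintype ι] {Q : Matrix ι ι K}

theorem isIdempotentElem_mulVecLin (hQ : IsIdempotentElem Q) : IsIdempotentElem Q.mulVecLin := by
  rw [IsIdempotentElem, Module.End.mul_eq_comp, ← mulVecLin_mul, hQ.eq]

variable [DecidableEq ι]

theorem mulVecLin_one_sub : (1 - Q).mulVecLin = 1 - Q.mulVecLin := by
  refine LinearMap.ext fun x => ?_
  simp

theorem finrank_ker_mulVecLin_one_sub (hQ : IsIdempotentElem Q) :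
    Module.finrank K (LinearMap.ker (1 - Q).mulVecLin) = Q.rank := by
  rw [mulVecLin_one_sub, ← LinearMap.IsIdempotentElem.range_eq_ker_one_sub
    (isIdempotentElem_mulVecLin hQ), rank]

theorem finrank_range_mulVecLin_one_sub (hQ : IsIdempotentElem Q) :
    Module.finrank K (LinearMap.range (1 - Q).mulVecLin) = Fintype.card ι - Q.rank := by
  rw [mulVecLin_one_sub, ← LinearMap.IsIdempotentElem.ker_eq_range_one_sub
    (isIdempotentElem_mulVecLin hQ), rank, ← Module.finrank_fintype_fun_eq_card K,
    ← LinearMap.finrank_range_add_finrank_ker Q.mulVecLin, Nat.add_sub_cancel_left]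

end Matrix

namespace IsMoorePenrose

variable {k l : ℕ} {B : Matrix (Fin k) (Fin l) ℝ} {w : Fin l → ℝ}
  {N : Matrix (Fin k) (Fin k) ℝ}

theorem gram_mul_pinv_mul_eq (hw : ∀ e, 0 < w e) (hN : IsMoorePenrose (B * diagonal w * Bᵀ) N) :
    B * diagonal w * Bᵀ * N * B = B := by
  obtain ⟨hLNL, -, -, -⟩ := hN
  have h : (1 - B * diagonal w * Bᵀ * N) * B = 0 := by
    apply mul_eq_zero_of_mul_gram_mul_transpose_eq_zero hw
    rw [Matrix.sub_mul, Matrix.one_mul, hLNL, sub_self, Matrix.zero_mul]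
  rwa [Matrix.sub_mul, Matrix.one_mul, sub_eq_zero, eq_comm] at h

theorem transpose_mul_pinv_mul_gram_eq (hw : ∀ e, 0 < w e)
    (hN : IsMoorePenrose (B * diagonal w * Bᵀ) N) :
    Bᵀ * N * (B * diagonal w * Bᵀ) = Bᵀ := by
  obtain ⟨hLNL, -, -, hNL⟩ := hN
  have h : (1 - N * (B * diagonal w * Bᵀ)) * B = 0 := by
    apply mul_eq_zero_of_mul_gram_mul_transpose_eq_zero hw
    rw [transpose_sub, transpose_one, hNL, Matrix.mul_assoc, Matrix.mul_sub, Matrix.mul_one,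
      ← Matrix.mul_assoc (B * diagonal w * Bᵀ) N, hLNL, sub_self, Matrix.mul_zero]
  rw [Matrix.sub_mul, Matrix.one_mul, sub_eq_zero] at h
  have := congrArg transpose h.symm
  rwa [transpose_mul, hNL, ← Matrix.mul_assoc] at this

end IsMoorePenrose

/-- The projection onto `range (W Bᵀ)` along `ker B`, complementary to the cycle projection. -/
def cutProj {k l : ℕ} (B : Matrix (Fin k) (Fin l) ℝ) (w : Fin l → ℝ)
    (N : Matrix (Fin k) (Fin k) ℝ) : Matrix (Fin l) (Fin l) ℝ :=
  diagonal w * Bᵀ * N * B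

section cutProj

variable {k l : ℕ} {B : Matrix (Fin k) (Fin l) ℝ} {w : Fin l → ℝ}
  {N : Matrix (Fin k) (Fin k) ℝ}

theorem mul_cutProj (hw : ∀ e, 0 < w e) (hN : IsMoorePenrose (B * diagonal w * Bᵀ) N) :
    B * cutProj B w N = B := by
  simpa only [cutProj, Matrix.mul_assoc] using hN.gram_mul_pinv_mul_eq hw

theorem cutProj_mul_diagonal_mul_transpose (hw : ∀ e, 0 < w e)
    (hN : IsMoorePenrose (B * diagonal w * Bᵀ) N) :
    cutProj B w N * (diagonal w * Bᵀ) = diagonal w * Bᵀ := by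
  have h := congrArg (diagonal w * ·) (hN.transpose_mul_pinv_mul_gram_eq hw)
  simpa only [cutProj, Matrix.mul_assoc] using h

theorem isIdempotentElem_cutProj (hw : ∀ e, 0 < w e)
    (hN : IsMoorePenrose (B * diagonal w * Bᵀ) N) : IsIdempotentElem (cutProj B w N) := by
  change diagonal w * Bᵀ * N * B * cutProj B w N = cutProj B w N
  rw [Matrix.mul_assoc, mul_cutProj hw hN]
  rfl

theorem rank_cutProj (hw : ∀ e, 0 < w e) (hN : IsMoorePenrose (B * diagonal w * Bᵀ) N) :
    (cutProj B w N).rank = B.rank :=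
  le_antisymm (rank_mul_le_right _ _)
    (by simpa only [mul_cutProj hw hN] using rank_mul_le_right B (cutProj B w N))

theorem ker_one_sub_cutProj_mul_diagonal (hw : ∀ e, 0 < w e)
    (hN : IsMoorePenrose (B * diagonal w * Bᵀ) N) :
    LinearMap.ker ((1 - cutProj B w N) * diagonal w).mulVecLin =
      LinearMap.range Bᵀ.mulVecLin := by
  refine le_antisymm (fun x hx => ?_) ?_
  · have hWinj : Function.Injective (diagonal w).mulVec :=
      mulVec_injective_of_det_ne_zero <| by
        simpa only [det_diagonal] using Finset.prod_ne_zero_iff.2 fun e _ => (hw e).ne'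
    rw [LinearMap.mem_ker, mulVecLin_apply, Matrix.sub_mul, Matrix.one_mul, sub_mulVec,
      sub_eq_zero] at hx
    refine ⟨(N * B * diagonal w) *ᵥ x, hWinj ?_⟩
    rw [mulVecLin_apply, mulVec_mulVec, mulVec_mulVec, hx]
    simp only [cutProj, Matrix.mul_assoc]
  · rintro _ ⟨y, rfl⟩
    rw [LinearMap.mem_ker, mulVecLin_apply, mulVecLin_apply, mulVec_mulVec, Matrix.mul_assoc,
      Matrix.sub_mul, Matrix.one_mul, cutProj_mul_diagonal_mul_transpose hw hN, sub_self,
      zero_mulVec]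

end cutProj

theorem cycProj_eq_one_sub_cutProj {n m : ℕ} (G : OGraph n m) (a d : Fin m → ℝ)
    (N : Matrix (Fin n) (Fin n) ℝ) : cycProj G a d N = 1 - cutProj G.inc (d * a) N := by
  rw [cycProj, cutProj, diagonal_mul_diagonal]
  rfl

namespace OGraph

variable {n m : ℕ} (G : OGraph n m)

theorem inc_transpose_mulVec_apply (x : Fin n → ℝ) (e : Fin m) :
    (G.incᵀ *ᵥ x) e = x (G.tgt e) - x (G.src e) := by
  have hne := G.noLoop e
  simp only [mulVec, dotProduct, transpose_apply, inc, of_apply, ite_mul, one_mul, neg_mul,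
    zero_mul]
  calc _ = ∑ i, ((if i = G.tgt e then x i else 0) - if i = G.src e then x i else 0) :=
        Finset.sum_congr rfl fun i _ => by split_ifs <;> simp_all
    _ = _ := by simp [Finset.sum_sub_distrib]

theorem Connected.ker_inc_transpose {G : OGraph n m} (hG : G.Connected) :
    LinearMap.ker G.incᵀ.mulVecLin = Submodule.span ℝ {1} := by
  refine le_antisymm (fun x hx => ?_) ?_
  · have hedge : ∀ e, x (G.tgt e) = x (G.src e) := fun e => by
      rw [← sub_eq_zero, ← inc_transpose_mulVec_apply]
      exact congrFun hx e
    have hconst : ∀ i j, x i = x j := fun i j => by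
      induction hG i j with
      | refl => rfl
      | tail _ hij ih =>
        obtain ⟨e, ⟨rfl, rfl⟩ | ⟨rfl, rfl⟩⟩ := hij
        exacts [ih.trans (hedge e).symm, ih.trans (hedge e)]
    rcases isEmpty_or_nonempty (Fin n) with h | ⟨⟨i⟩⟩
    · exact Subsingleton.elim x 0 ▸ Submodule.zero_mem _
    · exact Submodule.mem_span_singleton.2 ⟨x i, funext fun j => by simp [hconst i j]⟩
  · rw [Submodule.span_le, Set.singleton_subset_iff, SetLike.mem_coe, LinearMap.mem_ker]
    funext e
    rw [mulVecLin_apply, inc_transpose_mulVec_apply]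
    simp

theorem Connected.rank_inc {G : OGraph n m} (hG : G.Connected) : G.inc.rank = n - 1 := by
  rw [← rank_transpose]
  rcases Nat.eq_zero_or_pos n with rfl | hn
  · exact Nat.le_zero.1 (rank_le_width _)
  have : NeZero n := ⟨hn.ne'⟩
  have hrn := LinearMap.finrank_range_add_finrank_ker G.incᵀ.mulVecLin
  rw [hG.ker_inc_transpose, finrank_span_singleton one_ne_zero, Module.finrank_fin_fun] at hrn
  rw [rank]
  omega

end OGraph

/-- Properties of the `D`-weighted cycle projection. -/
theorem cycle_projection_properties {n m : ℕ} (hn : 0 < n) (G : OGraph n m)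
    (hconn : G.Connected)
    (a : Fin m → ℝ) (ha : ∀ e, 0 < a e)
    (d : Fin m → ℝ) (hd : ∀ e, 0 < d e)
    (N : Matrix (Fin n) (Fin n) ℝ)
    (hN : IsMoorePenrose
      (G.inc * (Matrix.diagonal d * Matrix.diagonal a) * G.incᵀ) N) :
    cycProj G a d N * cycProj G a d N = cycProj G a d N ∧
    (∀ μ : ℝ, Module.End.HasEigenvalue (cycProj G a d N).mulVecLin μ → μ = 0 ∨ μ = 1) ∧
    Module.finrank ℝ (Module.End.eigenspace (cycProj G a d N).mulVecLin 0) = n - 1 ∧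
    Module.finrank ℝ (Module.End.eigenspace (cycProj G a d N).mulVecLin 1) = m + 1 - n ∧
    (cycProj G a d N).charpoly =
      Polynomial.X ^ (n - 1) * (Polynomial.X - 1) ^ (m + 1 - n) ∧
    LinearMap.ker ((cycProj G a d N * (Matrix.diagonal d * Matrix.diagonal a)).mulVecLin) =
      LinearMap.range G.incᵀ.mulVecLin := by
  have hw : ∀ e, 0 < (d * a) e := fun e => mul_pos (hd e) (ha e)
  rw [diagonal_mul_diagonal', ← Pi.mul_def] at hN ⊢
  have hQ := isIdempotentElem_cutProj hw hN
  have hP := isIdempotentElem_mulVecLin hQ.one_sub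
  have hrank : (cutProj G.inc (d * a) N).rank = n - 1 := (rank_cutProj hw hN).trans hconn.rank_inc
  have hker : Module.finrank ℝ (LinearMap.ker (1 - cutProj G.inc (d * a) N).mulVecLin) = n - 1 :=
    (finrank_ker_mulVecLin_one_sub hQ).trans hrank
  have hrange :
      Module.finrank ℝ (LinearMap.range (1 - cutProj G.inc (d * a) N).mulVecLin) = m + 1 - n := by
    rw [finrank_range_mulVecLin_one_sub hQ, hrank, Fintype.card_fin]
    omega
  rw [cycProj_eq_one_sub_cutProj]
  refine ⟨hQ.one_sub.eq, fun μ hμ => hμ.eq_zero_or_eq_one_of_isIdempotentElem hP, ?_, ?_, ?_,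
    ker_one_sub_cutProj_mul_diagonal hw hN⟩
  · rwa [Module.End.eigenspace_zero]
  · rwa [Module.End.eigenspace_one_eq_range_of_isIdempotentElem hP]
  · rw [← Matrix.charpoly_mulVecLin, Module.End.charpoly_eq_of_isIdempotentElem hP, hker, hrange]

end
end
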